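/- arXiv:1703.06709 — 11 statements merged into one kernel-verified Lean document; each statement's English description precedes it below -/
import Mathlib

section
/- Let B be a bilinear form on ℂ[z] with moments μ_{i,j} := B[z^i, z^j] and moment determinants τ_0 := 1, τ_n := det(μ_{i,j})_{i,j=0}^{n-1}, and assume τ_n ≠ 0 for all n ≥ 1. Define φ_0(z) := 1 and, for n ≥ 1, φ_n(z) := (1/τ_n) · det of the (n+1)×(n+1) matrix whose entry in row i (0 ≤ i ≤ n) and column j (0 ≤ j ≤ n−1) is μ_{i,j} and whose last column is (1, z, z², …, z^n)ᵀ. Then each φ_n is a monic polynomial of degree n and B[φ_n(z), z^m] = (τ_{n+1}/τ_n)·δ_{m,n} for every n ≥ 0 and every 0 ≤ m ≤ n. -/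
/-!
The bordered determinant `D_n` (moment matrix of size `n + 1` with last column `(z^i)`) is,
by Laplace expansion along that column, `∑ i, adj_{n,i} z^i`; hence any linear functional
applied to `D_n` just replaces the last column by the functional's values on the `z^i`.
For `coeff k` this gives `deg D_n ≤ n` with leading coefficient `τ_n`; for `B[·, z^m]` it gives
the moment matrix of size `n + 1` with last column `(μ_{i,m})`, which repeats column `m` when
`m < n` and is the moment matrix itself when `m = n`.
-/

open Polynomial Matrix

namespace Matrix

variable {R : Type*} [CommRing R] {ι : Type*} [Fintype ι] [DecidableEq ι]

theorem det_updateCol_eq_sum_adjugate (A : Matrix ι ι R) (k : ι) (v : ι → R) :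
    (A.updateCol k v).det = ∑ i, A.adjugate k i * v i := by
  rw [← cramer_apply, cramer_eq_adjugate_mulVec]
  rfl

theorem linearMap_det_updateCol_map_algebraMap {S : Type*} [CommRing S] [Algebra R S]
    (L : S →ₗ[R] R) (A : Matrix ι ι R) (k : ι) (p : ι → S) :
    L ((A.map (algebraMap R S)).updateCol k p).det = (A.updateCol k fun i => L (p i)).det := by
  rw [det_updateCol_eq_sum_adjugate, det_updateCol_eq_sum_adjugate, ← RingHom.mapMatrix_apply,
    ← RingHom.map_adjugate, map_sum]
  refine Finset.sum_congr rfl fun i _ => ?_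
  rw [RingHom.mapMatrix_apply, map_apply, ← Algebra.smul_def, map_smul, smul_eq_mul]

theorem det_updateCol_last_single {n : ℕ} (A : Matrix (Fin (n + 1)) (Fin (n + 1)) R) :
    (A.updateCol (Fin.last n) (Pi.single (Fin.last n) 1)).det
      = (A.submatrix Fin.castSucc Fin.castSucc).det := by
  rw [det_updateCol_eq_sum_adjugate, Fintype.sum_eq_single (Fin.last n)
      fun i hi => by rw [Pi.single_eq_of_ne hi, mul_zero],
    Pi.single_eq_same, mul_one, adjugate_fin_succ_eq_det_submatrix, Fin.succAbove_last,
    ← two_mul, pow_mul, neg_one_sq, one_pow, one_mul]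

end Matrix

section Moments

variable {K : Type*} [Field K] (μ : ℕ → ℕ → K)

def momentMatrix (n : ℕ) : Matrix (Fin n) (Fin n) K := of fun i j => μ i j

/-- The paper's `τ_n φ_n`; `monicMomentPoly μ n` below is `φ_n`. -/
noncomputable def momentPoly (n : ℕ) : K[X] :=
  (((momentMatrix μ (n + 1)).map C).updateCol (Fin.last n) fun i => X ^ (i : ℕ)).det

theorem momentPoly_eq_det_bordered (n : ℕ) : momentPoly μ n
    = (of fun i j : Fin (n + 1) => if (j : ℕ) < n then C (μ i j) else X ^ (i : ℕ)).det := by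
  rw [momentPoly]
  congr 1
  ext i j
  rcases Fin.eq_castSucc_or_eq_last j with ⟨j, rfl⟩ | rfl
  · simp [momentMatrix]
  · simp

theorem momentPoly_zero : momentPoly μ 0 = 1 := by
  simp [momentPoly, det_unique]

theorem coeff_momentPoly (n k : ℕ) : (momentPoly μ n).coeff k
    = ((momentMatrix μ (n + 1)).updateCol (Fin.last n) fun i => if k = i then 1 else 0).det := by
  rw [← lcoeff_apply, momentPoly, ← algebraMap_eq, linearMap_det_updateCol_map_algebraMap]
  simp only [lcoeff_apply, coeff_X_pow]

theorem coeff_momentPoly_of_lt {n k : ℕ} (h : n < k) : (momentPoly μ n).coeff k = 0 := by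
  rw [coeff_momentPoly]
  refine det_eq_zero_of_column_eq_zero (Fin.last n) fun i => ?_
  simp [(i.is_lt.trans_le h).ne']

theorem coeff_momentPoly_self (n : ℕ) : (momentPoly μ n).coeff n = (momentMatrix μ n).det := by
  rw [coeff_momentPoly]
  convert det_updateCol_last_single (momentMatrix μ (n + 1)) using 3
  · ext i
    simp [Pi.single_apply, Fin.ext_iff, eq_comm]
  · rfl

theorem natDegree_momentPoly_le (n : ℕ) : (momentPoly μ n).natDegree ≤ n :=
  natDegree_le_iff_coeff_eq_zero.2 fun _ hk => coeff_momentPoly_of_lt μ (by exact_mod_cast hk)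

theorem det_updateCol_last_momentMatrix {n m : ℕ} (hm : m ≤ n) :
    ((momentMatrix μ (n + 1)).updateCol (Fin.last n) fun i => μ i m).det
      = if m = n then (momentMatrix μ (n + 1)).det else 0 := by
  split_ifs with hmn
  · subst hmn
    exact congrArg det (updateCol_eq_self _ (Fin.last m))
  · have hne : (⟨m, by omega⟩ : Fin (n + 1)) ≠ Fin.last n := by
      simp [Fin.ext_iff, hmn]
    exact det_updateCol_eq_zero hne

noncomputable def monicMomentPoly (n : ℕ) : K[X] :=
  C (momentMatrix μ n).det⁻¹ * momentPoly μ n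

theorem monicMomentPoly_zero : monicMomentPoly μ 0 = 1 := by
  simp [monicMomentPoly, momentPoly_zero]

variable {μ}

theorem natDegree_monicMomentPoly_le (n : ℕ) : (monicMomentPoly μ n).natDegree ≤ n :=
  (natDegree_C_mul_le _ _).trans (natDegree_momentPoly_le μ n)

theorem coeff_monicMomentPoly_self {n : ℕ} (h : (momentMatrix μ n).det ≠ 0) :
    (monicMomentPoly μ n).coeff n = 1 := by
  rw [monicMomentPoly, coeff_C_mul, coeff_momentPoly_self, inv_mul_cancel₀ h]

theorem monic_monicMomentPoly {n : ℕ} (h : (momentMatrix μ n).det ≠ 0) :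
    (monicMomentPoly μ n).Monic :=
  monic_of_natDegree_le_of_coeff_eq_one n (natDegree_monicMomentPoly_le n)
    (coeff_monicMomentPoly_self h)

theorem degree_monicMomentPoly {n : ℕ} (h : (momentMatrix μ n).det ≠ 0) :
    (monicMomentPoly μ n).degree = n :=
  degree_eq_of_le_of_coeff_ne_zero
    (natDegree_le_iff_degree_le.1 (natDegree_monicMomentPoly_le n))
    (by rw [coeff_monicMomentPoly_self h]; exact one_ne_zero)

theorem bilin_momentPoly_X_pow {B : K[X] →ₗ[K] K[X] →ₗ[K] K}
    (hμ : ∀ i j, μ i j = B (X ^ i) (X ^ j)) (n m : ℕ) :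
    B (momentPoly μ n) (X ^ m)
      = ((momentMatrix μ (n + 1)).updateCol (Fin.last n) fun i => μ i m).det := by
  rw [← B.flip_apply, momentPoly, ← algebraMap_eq, linearMap_det_updateCol_map_algebraMap]
  simp only [LinearMap.flip_apply, hμ]

theorem bilin_monicMomentPoly_X_pow {B : K[X] →ₗ[K] K[X] →ₗ[K] K}
    (hμ : ∀ i j, μ i j = B (X ^ i) (X ^ j)) {n m : ℕ} (hm : m ≤ n) :
    B (monicMomentPoly μ n) (X ^ m)
      = (momentMatrix μ (n + 1)).det / (momentMatrix μ n).det * if m = n then 1 else 0 := by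
  rw [monicMomentPoly, ← smul_eq_C_mul, map_smul, LinearMap.smul_apply, smul_eq_mul,
    bilin_momentPoly_X_pow hμ, det_updateCol_last_momentMatrix μ hm]
  split_ifs <;> simp [div_eq_inv_mul]

end Moments

/-- Determinant representation of the first family of monic biorthogonal polynomials:
each `φ n` is monic of degree `n` and satisfies the biorthogonality relation
`B[φ_n, z^m] = (τ_{n+1}/τ_n) δ_{m,n}` for `0 ≤ m ≤ n`. -/
theorem stmt_0
    (B : Polynomial ℂ →ₗ[ℂ] Polynomial ℂ →ₗ[ℂ] ℂ)
    (μ : ℕ → ℕ → ℂ) (hμ : ∀ i j : ℕ, μ i j = B (X ^ i) (X ^ j))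
    (τ : ℕ → ℂ)
    (hτ : ∀ n : ℕ, τ n = Matrix.det (Matrix.of fun i j : Fin n => μ (i : ℕ) (j : ℕ)))
    (hτne : ∀ n : ℕ, 1 ≤ n → τ n ≠ 0)
    (φ : ℕ → Polynomial ℂ)
    (hφ0 : φ 0 = 1)
    (hφ : ∀ n : ℕ, 1 ≤ n → φ n = C (τ n)⁻¹ *
      Matrix.det (Matrix.of fun i j : Fin (n + 1) =>
        if (j : ℕ) < n then C (μ (i : ℕ) (j : ℕ)) else X ^ (i : ℕ))) :
    ∀ n : ℕ, (φ n).Monic ∧ (φ n).degree = n ∧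
      ∀ m : ℕ, m ≤ n →
        B (φ n) (X ^ m) = τ (n + 1) / τ n * (if m = n then 1 else 0) := by
  have hτ_eq (n : ℕ) : τ n = (momentMatrix μ n).det := hτ n
  have hdet_ne (n : ℕ) : (momentMatrix μ n).det ≠ 0 := by
    rcases Nat.eq_zero_or_pos n with rfl | hn
    · simp
    · exact hτ_eq n ▸ hτne n hn
  have hφ_eq (n : ℕ) : φ n = monicMomentPoly μ n := by
    rcases Nat.eq_zero_or_pos n with rfl | hn
    · rw [hφ0, monicMomentPoly_zero]
    · rw [hφ n hn, hτ_eq, ← momentPoly_eq_det_bordered]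
      rfl
  intro n
  rw [hφ_eq, hτ_eq, hτ_eq]
  exact ⟨monic_monicMomentPoly (hdet_ne n), degree_monicMomentPoly (hdet_ne n),
    fun m hm => bilin_monicMomentPoly_X_pow hμ hm⟩
end

section
/- Let ({φ_n}, {ψ_n}) be a pair of monic biorthogonal polynomial sequences with respect to a bilinear form B on ℂ[z], with biorthogonality constants h_n. Let s* ∈ ℂ satisfy φ_n(s*) ≠ 0 for all n ≥ 0, and set q*_n := −φ_{n+1}(s*)/φ_n(s*). Then for every n ≥ 0 the polynomial z − s* divides φ_{n+1}(z) + q*_n φ_n(z); the quotient φ*_n(z) := (φ_{n+1}(z) + q*_n φ_n(z))/(z − s*) is a monic polynomial of degree n; and B*[φ*_n(z), z^m] = q*_n h_n δ_{m,n} for all n ≥ 0 and 0 ≤ m ≤ n, where B* is the bilinear form defined by B*[p, q] := B[(z − s*)p, q]. -/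
/-!
The choice of `q*_n` makes `s*` a root of `T = φ_{n+1} + q*_n φ_n`, which is monic of degree
`n + 1`, so `T /ₘ (z - s*)` is monic of degree `n` and `(z - s*) (T /ₘ (z - s*)) = T`.
Biorthogonality gives `B[T, ψ_k] = q*_n h_n δ_{k,n}` for `k ≤ n`. Finally, a linear functional
killing `ψ_k` for all `k < m` kills every polynomial of degree `< m` (peel off leading terms
against the monic `ψ_k`), in particular `z^m - ψ_m`, so `B[T, z^m] = B[T, ψ_m]`.
-/

open Polynomial

namespace Polynomial

variable {R : Type*} [CommRing R]

theorem degree_sub_C_coeff_mul_lt {p r : R[X]} {n : ℕ} (hp : p.degree < ↑(n + 1))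
    (hr : r.Monic) (hrd : r.degree = n) : (p - C (p.coeff n) * r).degree < n := by
  have hrn : r.natDegree = n := natDegree_eq_of_degree_eq_some hrd
  rw [degree_lt_iff_coeff_zero]
  intro k hk
  rw [coeff_sub, coeff_C_mul]
  rcases hk.eq_or_lt with rfl | hlt
  · rw [← hrn, hr.coeff_natDegree, mul_one, sub_self]
  · rw [(degree_lt_iff_coeff_zero p _).mp hp k hlt,
      coeff_eq_zero_of_natDegree_lt (by rwa [hrn] : r.natDegree < k), mul_zero, sub_zero]

variable {M : Type*} [AddCommGroup M] [Module R M] {ψ : ℕ → R[X]}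

theorem linearMap_eq_zero_of_degree_lt (L : R[X] →ₗ[R] M) (hψm : ∀ k, (ψ k).Monic)
    (hψd : ∀ k : ℕ, (ψ k).degree = k) {n : ℕ} (hL : ∀ k < n, L (ψ k) = 0) {p : R[X]}
    (hp : p.degree < n) : L p = 0 := by
  induction n generalizing p with
  | zero => rw [Nat.cast_zero, Nat.WithBot.lt_zero_iff, degree_eq_bot] at hp; simp [hp]
  | succ n ih =>
    have hrest : L (p - C (p.coeff n) * ψ n) = 0 :=
      ih (fun k hk => hL k (by omega)) (degree_sub_C_coeff_mul_lt hp (hψm n) (hψd n))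
    rw [← sub_add_cancel p (C (p.coeff n) * ψ n), map_add, hrest, ← smul_eq_C_mul, map_smul,
      hL n n.lt_succ_self, smul_zero, zero_add]

theorem linearMap_X_pow_eq (L : R[X] →ₗ[R] M) (hψm : ∀ k, (ψ k).Monic)
    (hψd : ∀ k : ℕ, (ψ k).degree = k) {m : ℕ} (hL : ∀ k < m, L (ψ k) = 0) :
    L (X ^ m) = L (ψ m) := by
  have hlt := degree_sub_C_coeff_mul_lt ((degree_X_pow_le m).trans_lt
    (by exact_mod_cast m.lt_succ_self)) (hψm m) (hψd m)
  rw [coeff_X_pow_self, C_1, one_mul] at hlt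
  rw [← sub_eq_zero, ← map_sub]
  exact linearMap_eq_zero_of_degree_lt L hψm hψd hL hlt

theorem Monic.divByMonic_X_sub_C [Nontrivial R] {p : R[X]} {n : ℕ} (hp : p.Monic)
    (hpd : p.degree = ↑(n + 1)) {s : R} (hs : p.IsRoot s) :
    (p /ₘ (X - C s)).Monic ∧ (p /ₘ (X - C s)).degree = n := by
  have hQm : (p /ₘ (X - C s)).Monic :=
    (monic_X_sub_C s).of_mul_monic_left (by rwa [mul_divByMonic_eq_iff_isRoot.mpr hs])
  refine ⟨hQm, ?_⟩
  rw [degree_eq_natDegree hQm.ne_zero, natDegree_divByMonic p (monic_X_sub_C s),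
    natDegree_eq_of_degree_eq_some hpd, natDegree_X_sub_C, Nat.add_sub_cancel]

theorem Monic.add_C_mul_of_degree [Nontrivial R] {p r : R[X]} {n : ℕ} (hp : p.Monic)
    (hpd : p.degree = ↑(n + 1)) (hrd : r.degree = n) (c : R) :
    (p + C c * r).Monic ∧ (p + C c * r).degree = ↑(n + 1) := by
  have hlt : (C c * r).degree < p.degree := by
    rw [← smul_eq_C_mul, hpd]
    exact (degree_smul_le c r).trans_lt (by rw [hrd]; exact_mod_cast n.lt_succ_self)
  exact ⟨hp.add_of_left hlt, by rw [degree_add_eq_left_of_degree_lt hlt, hpd]⟩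

end Polynomial

theorem stmt_3_general
    (B : Polynomial ℂ →ₗ[ℂ] Polynomial ℂ →ₗ[ℂ] ℂ)
    (φ ψ : ℕ → Polynomial ℂ) (h : ℕ → ℂ)
    (hφm : ∀ n, (φ n).Monic) (hφd : ∀ n : ℕ, (φ n).degree = n)
    (hψm : ∀ n, (ψ n).Monic) (hψd : ∀ n : ℕ, (ψ n).degree = n)
    (hbi : ∀ m n : ℕ, B (φ m) (ψ n) = if m = n then h n else 0)
    (s : ℂ) (hs : ∀ n, (φ n).eval s ≠ 0)
    (q : ℕ → ℂ) (hq : ∀ n, q n = -((φ (n + 1)).eval s) / ((φ n).eval s)) :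
    ∀ n : ℕ,
      (X - C s) ∣ (φ (n + 1) + C (q n) * φ n) ∧
      ((φ (n + 1) + C (q n) * φ n) /ₘ (X - C s)).Monic ∧
      ((φ (n + 1) + C (q n) * φ n) /ₘ (X - C s)).degree = n ∧
      ∀ m : ℕ, m ≤ n →
        B ((X - C s) * ((φ (n + 1) + C (q n) * φ n) /ₘ (X - C s))) (X ^ m)
          = q n * h n * (if m = n then 1 else 0) := by
  intro n
  set T := φ (n + 1) + C (q n) * φ n with hT
  have hroot : T.IsRoot s := by
    rw [IsRoot, eval_add, eval_mul, eval_C, hq, div_mul_cancel₀ _ (hs n), add_neg_cancel]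
  obtain ⟨hTm, hTd⟩ := (hφm (n + 1)).add_C_mul_of_degree (hφd (n + 1)) (hφd n) (q n)
  obtain ⟨hQm, hQd⟩ := hTm.divByMonic_X_sub_C hTd hroot
  have hTψ : ∀ k ≤ n, B T (ψ k) = q n * h n * (if k = n then 1 else 0) := by
    intro k hk
    rw [hT, ← smul_eq_C_mul, map_add, map_smul, LinearMap.add_apply, LinearMap.smul_apply,
      hbi, hbi, if_neg (show n + 1 ≠ k by omega), zero_add, smul_eq_mul]
    rcases eq_or_ne k n with rfl | hkn
    · simp
    · simp [hkn, hkn.symm]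
  refine ⟨dvd_iff_isRoot.mpr hroot, hQm, hQd, fun m hm => ?_⟩
  have hTψ_lt : ∀ k < m, B T (ψ k) = 0 := fun k hk => by
    rw [hTψ k (by omega), if_neg (show k ≠ n by omega), mul_zero]
  rw [mul_divByMonic_eq_iff_isRoot.mpr hroot, linearMap_X_pow_eq (B T) hψm hψd hTψ_lt, hTψ m hm]

/-- Christoffel-type spectral transformation for the first family: `z - s*` divides
`φ_{n+1} + q*_n φ_n`, the quotient `φ*_n` is monic of degree `n`, and it is biorthogonal
with respect to `B*[p, q] = B[(z - s*) p, q]` with constants `q*_n h_n`. -/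
theorem stmt_3
    (B : Polynomial ℂ →ₗ[ℂ] Polynomial ℂ →ₗ[ℂ] ℂ)
    (φ ψ : ℕ → Polynomial ℂ) (h : ℕ → ℂ)
    (hφm : ∀ n, (φ n).Monic) (hφd : ∀ n : ℕ, (φ n).degree = n)
    (hψm : ∀ n, (ψ n).Monic) (hψd : ∀ n : ℕ, (ψ n).degree = n)
    (hne : ∀ n, h n ≠ 0)
    (hbi : ∀ m n : ℕ, B (φ m) (ψ n) = if m = n then h n else 0)
    (s : ℂ) (hs : ∀ n, (φ n).eval s ≠ 0)
    (q : ℕ → ℂ) (hq : ∀ n, q n = -((φ (n + 1)).eval s) / ((φ n).eval s)) :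
    ∀ n : ℕ,
      (X - C s) ∣ (φ (n + 1) + C (q n) * φ n) ∧
      ((φ (n + 1) + C (q n) * φ n) /ₘ (X - C s)).Monic ∧
      ((φ (n + 1) + C (q n) * φ n) /ₘ (X - C s)).degree = n ∧
      ∀ m : ℕ, m ≤ n →
        B ((X - C s) * ((φ (n + 1) + C (q n) * φ n) /ₘ (X - C s))) (X ^ m)
          = q n * h n * (if m = n then 1 else 0) :=
  stmt_3_general B φ ψ h hφm hφd hψm hψd hbi s hs q hq
end

section
/- Let B be a bilinear form on ℂ[z] with moment determinants τ_n, assume τ_n ≠ 0 for all n ≥ 1, and let ({φ_n}, {ψ_n}) be a pair of monic biorthogonal polynomial sequences with respect to B (so h_n = τ_{n+1}/τ_n). Let s* ∈ ℂ satisfy φ_n(s*) ≠ 0 for all n, set q*_n := −φ_{n+1}(s*)/φ_n(s*), define B*[p, q] := B[(z − s*)p, q], and suppose ({φ*_n}, {ψ*_n}) is a pair of monic biorthogonal polynomial sequences with respect to B*. Then for every n ≥ 0: ψ_{n+1}(z) = ψ*_{n+1}(z) + e*_n ψ*_n(z), where e*_n = τ_n τ_{n+2} / (q*_n (τ_{n+1})²).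 -/
/-!
The Christoffel transform `B*[p, r] = B[(z - s*) p, r]` acts on the left family by the kernel
polynomial: `(z - s*) φ*_n = φ_{n+1} + q*_n φ_n`, the right side being the unique monic
combination of `φ_{n+1}, φ_n` vanishing at `s*`. Pairing with `ψ*_n` gives `h*_n = q*_n h_n`.
On the other side, `(z - s*) φ*_k` has degree `k + 1`, so `ψ_{n+1}` is `B*`-orthogonal to `φ*_k`
for `k < n`, and `B*[φ*_n, ψ_{n+1}] = h_{n+1}`; hence `ψ_{n+1} - (h_{n+1} / h*_n) ψ*_n` is the
monic polynomial of degree `n + 1` that characterizes `ψ*_{n+1}`. Finally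
`h_{n+1} / (q*_n h_n) = τ_n τ_{n+2} / (q*_n τ_{n+1}²)`.
-/

open Polynomial

namespace Polynomial

section CommRing

variable {R : Type*} [CommRing R]

theorem degree_sub_C_coeff_mul_lt_s6 {f p : R[X]} {m : ℕ} (hf : f.Monic) (hfd : f.degree = m)
    (hp : p.degree < ↑(m + 1)) : (p - C (p.coeff m) * f).degree < m := by
  rw [degree_lt_iff_coeff_zero]
  intro j hj
  rw [coeff_sub, coeff_C_mul]
  rcases hj.eq_or_lt with rfl | hj
  · rw [← natDegree_eq_of_degree_eq_some hfd, hf.coeff_natDegree, mul_one, sub_self]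
  · have hfj : f.coeff j = 0 := coeff_eq_zero_of_degree_lt (by rw [hfd]; exact_mod_cast hj)
    rw [(degree_lt_iff_coeff_zero p _).1 hp j (by omega), hfj, mul_zero, sub_zero]

theorem degree_sub_lt_of_monic {p q : R[X]} {n : ℕ} (hp : p.Monic) (hq : q.Monic)
    (hpd : p.degree = n) (hqd : q.degree = n) : (p - q).degree < n := by
  nontriviality R
  rw [← hpd]
  exact degree_sub_lt_left (hpd.trans hqd.symm) hp.ne_zero
    (by rw [hp.leadingCoeff, hq.leadingCoeff])

theorem degree_X_sub_C_mul [IsDomain R] {p : R[X]} {n : ℕ} (s : R) (hpd : p.degree = n) :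
    ((X - C s) * p).degree = ↑(n + 1) := by
  rw [degree_mul, degree_X_sub_C, hpd, add_comm]
  rfl

variable {f : ℕ → R[X]}

theorem map_eq_zero_of_degree_lt {M : Type*} [AddCommGroup M] [Module R M]
    (hf : ∀ k, (f k).Monic) (hfd : ∀ k, (f k).degree = k) (L : R[X] →ₗ[R] M)
    {m : ℕ} (hL : ∀ k < m, L (f k) = 0) {p : R[X]} (hp : p.degree < m) : L p = 0 := by
  induction m generalizing p with
  | zero => rw [show p = 0 by simpa using hp, map_zero]
  | succ m ih =>
    have hsplit : p = (p - C (p.coeff m) * f m) + p.coeff m • f m := by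
      rw [smul_eq_C_mul]; ring
    rw [hsplit, map_add, map_smul, ih (fun k hk => hL k (by omega))
      (degree_sub_C_coeff_mul_lt_s6 (hf m) (hfd m) hp), hL m (by omega), smul_zero, add_zero]

theorem eq_zero_of_forall_map_eq_zero [IsDomain R]
    (hf : ∀ k, (f k).Monic) (hfd : ∀ k, (f k).degree = k) (L : ℕ → R[X] →ₗ[R] R)
    (hLf : ∀ k j, k < j → L k (f j) = 0) (hLself : ∀ k, L k (f k) ≠ 0)
    {m : ℕ} {p : R[X]} (hp : p.degree < m) (hLp : ∀ k < m, L k p = 0) : p = 0 := by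
  induction m generalizing p with
  | zero => simpa using hp
  | succ m ih =>
    set c := p.coeff m
    have hrest : p - C c * f m = 0 := by
      refine ih (degree_sub_C_coeff_mul_lt_s6 (hf m) (hfd m) hp) fun k hk => ?_
      rw [map_sub, ← smul_eq_C_mul, map_smul, hLp k (by omega), hLf k m hk, smul_zero, sub_zero]
    have hc : c = 0 := by
      have hLm := hLp m (by omega)
      rw [sub_eq_zero.1 hrest, ← smul_eq_C_mul, map_smul, smul_eq_mul] at hLm
      exact (mul_eq_zero.1 hLm).resolve_right (hLself m)
    rw [sub_eq_zero.1 hrest, hc, C_0, zero_mul]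

end CommRing

end Polynomial

section Biorthogonal

variable {K : Type*} [Field K]

structure IsMonicBiorthogonal (B : K[X] →ₗ[K] K[X] →ₗ[K] K) (φ ψ : ℕ → K[X])
    (h : ℕ → K) : Prop where
  monic_left : ∀ n, (φ n).Monic
  degree_left : ∀ n : ℕ, (φ n).degree = n
  monic_right : ∀ n, (ψ n).Monic
  degree_right : ∀ n : ℕ, (ψ n).degree = n
  apply_eq : ∀ m n, B (φ m) (ψ n) = if m = n then h n else 0

namespace IsMonicBiorthogonal

variable {B : K[X] →ₗ[K] K[X] →ₗ[K] K} {φ ψ : ℕ → K[X]} {h : ℕ → K}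
  {n : ℕ} {p : K[X]}

theorem apply_left_eq_zero_of_degree_lt (hB : IsMonicBiorthogonal B φ ψ h)
    (hp : p.degree < n) : B (φ n) p = 0 :=
  map_eq_zero_of_degree_lt hB.monic_right hB.degree_right (B (φ n))
    (fun k hk => by rw [hB.apply_eq, if_neg hk.ne']) hp

theorem apply_right_eq_zero_of_degree_lt (hB : IsMonicBiorthogonal B φ ψ h)
    (hp : p.degree < n) : B p (ψ n) = 0 :=
  map_eq_zero_of_degree_lt hB.monic_left hB.degree_left (B.flip (ψ n))
    (fun k hk => by rw [LinearMap.flip_apply, hB.apply_eq, if_neg hk.ne]) hp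

theorem apply_left_of_monic (hB : IsMonicBiorthogonal B φ ψ h) (hp : p.Monic)
    (hpd : p.degree = n) : B (φ n) p = h n := by
  have hdiff := hB.apply_left_eq_zero_of_degree_lt
    (degree_sub_lt_of_monic hp (hB.monic_right n) hpd (hB.degree_right n))
  rw [map_sub, sub_eq_zero] at hdiff
  rw [hdiff, hB.apply_eq, if_pos rfl]

theorem apply_right_of_monic (hB : IsMonicBiorthogonal B φ ψ h) (hp : p.Monic)
    (hpd : p.degree = n) : B p (ψ n) = h n := by
  have hdiff := hB.apply_right_eq_zero_of_degree_lt
    (degree_sub_lt_of_monic hp (hB.monic_left n) hpd (hB.degree_left n))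
  rw [map_sub, LinearMap.sub_apply, sub_eq_zero] at hdiff
  rw [hdiff, hB.apply_eq, if_pos rfl]

theorem eq_left_of_monic (hB : IsMonicBiorthogonal B φ ψ h) (hh : ∀ n, h n ≠ 0)
    (hp : p.Monic) (hpd : p.degree = n)
    (horth : ∀ k < n, B p (ψ k) = 0) : p = φ n := by
  rw [← sub_eq_zero]
  refine eq_zero_of_forall_map_eq_zero hB.monic_left hB.degree_left (fun k => B.flip (ψ k))
    (fun k j hkj => ?_) (fun k => ?_)
    (degree_sub_lt_of_monic hp (hB.monic_left n) hpd (hB.degree_left n)) (fun k hk => ?_)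
  · rw [LinearMap.flip_apply, hB.apply_eq, if_neg hkj.ne']
  · rw [LinearMap.flip_apply, hB.apply_eq, if_pos rfl]
    exact hh k
  · rw [LinearMap.flip_apply, map_sub, LinearMap.sub_apply, horth k hk, hB.apply_eq,
      if_neg hk.ne', sub_zero]

theorem eq_right_of_monic (hB : IsMonicBiorthogonal B φ ψ h) (hh : ∀ n, h n ≠ 0)
    (hp : p.Monic) (hpd : p.degree = n)
    (horth : ∀ k < n, B (φ k) p = 0) : p = ψ n := by
  rw [← sub_eq_zero]
  refine eq_zero_of_forall_map_eq_zero hB.monic_right hB.degree_right (fun k => B (φ k))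
    (fun k j hkj => ?_) (fun k => ?_)
    (degree_sub_lt_of_monic hp (hB.monic_right n) hpd (hB.degree_right n)) (fun k hk => ?_)
  · rw [hB.apply_eq, if_neg hkj.ne]
  · rw [hB.apply_eq, if_pos rfl]
    exact hh k
  · rw [map_sub, horth k hk, hB.apply_eq, if_neg hk.ne, sub_zero]

variable {B' : K[X] →ₗ[K] K[X] →ₗ[K] K} {φ' ψ' : ℕ → K[X]} {h' : ℕ → K} {s : K}

theorem X_sub_C_mul_left_eq (hB : IsMonicBiorthogonal B φ ψ h)
    (hB' : IsMonicBiorthogonal B' φ' ψ' h') (hh' : ∀ n, h' n ≠ 0)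
    (hB'B : ∀ p r, B' p r = B ((X - C s) * p) r) (hs : ∀ n, (φ n).eval s ≠ 0) (n : ℕ) :
    (X - C s) * φ' n = φ (n + 1) + C (-(φ (n + 1)).eval s / (φ n).eval s) * φ n := by
  set r := φ (n + 1) + C (-(φ (n + 1)).eval s / (φ n).eval s) * φ n
  have hlow : (C (-(φ (n + 1)).eval s / (φ n).eval s) * φ n).degree < ↑(n + 1) := by
    rw [← smul_eq_C_mul]
    exact (degree_smul_le _ _).trans_lt (by rw [hB.degree_left]; exact_mod_cast n.lt_succ_self)
  have hroot : r.IsRoot s := by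
    simp only [r, IsRoot, eval_add, eval_mul, eval_C, div_mul_cancel₀ _ (hs n), add_neg_cancel]
  have hfactor : (X - C s) * (r /ₘ (X - C s)) = r := mul_divByMonic_eq_iff_isRoot.2 hroot
  have hrd : r.degree = ↑(n + 1) := by
    rw [degree_add_eq_left_of_degree_lt (hB.degree_left (n + 1) ▸ hlow), hB.degree_left]
  have hrm : r.Monic := (hB.monic_left (n + 1)).add_of_left (hB.degree_left (n + 1) ▸ hlow)
  have hqm : (r /ₘ (X - C s)).Monic :=
    (monic_X_sub_C s).of_mul_monic_left (by rw [hfactor]; exact hrm)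
  have hqd : (r /ₘ (X - C s)).degree = n := by
    rw [degree_eq_natDegree hqm.ne_zero, natDegree_divByMonic _ (monic_X_sub_C s),
      natDegree_eq_of_degree_eq_some hrd, natDegree_X_sub_C]
    rfl
  suffices φ' n = r /ₘ (X - C s) by rw [this, hfactor]
  refine (hB'.eq_left_of_monic hh' hqm hqd fun k hk => ?_).symm
  have hψ'k : (ψ' k).degree < n := by rw [hB'.degree_right]; exact_mod_cast hk
  rw [hB'B, hfactor, map_add, LinearMap.add_apply,
    hB.apply_left_eq_zero_of_degree_lt (hψ'k.trans (by exact_mod_cast n.lt_succ_self)),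
    ← smul_eq_C_mul, map_smul, LinearMap.smul_apply, hB.apply_left_eq_zero_of_degree_lt hψ'k,
    smul_zero, add_zero]

theorem const_eq_mul (hB : IsMonicBiorthogonal B φ ψ h)
    (hB' : IsMonicBiorthogonal B' φ' ψ' h') (hh' : ∀ n, h' n ≠ 0)
    (hB'B : ∀ p r, B' p r = B ((X - C s) * p) r) (hs : ∀ n, (φ n).eval s ≠ 0) (n : ℕ) :
    h' n = -(φ (n + 1)).eval s / (φ n).eval s * h n := by
  have hψ'n : (ψ' n).degree < ↑(n + 1) := by
    rw [hB'.degree_right]; exact_mod_cast n.lt_succ_self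
  have hself := hB'.apply_eq n n
  rw [if_pos rfl] at hself
  rw [← hself, hB'B, X_sub_C_mul_left_eq hB hB' hh' hB'B hs, map_add,
    LinearMap.add_apply, hB.apply_left_eq_zero_of_degree_lt hψ'n, ← smul_eq_C_mul, map_smul,
    LinearMap.smul_apply, hB.apply_left_of_monic (hB'.monic_right n) (hB'.degree_right n),
    zero_add, smul_eq_mul]

theorem right_succ_eq_add (hB : IsMonicBiorthogonal B φ ψ h)
    (hB' : IsMonicBiorthogonal B' φ' ψ' h') (hh' : ∀ n, h' n ≠ 0)
    (hB'B : ∀ p r, B' p r = B ((X - C s) * p) r) (n : ℕ) :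
    ψ (n + 1) = ψ' (n + 1) + C (h (n + 1) / h' n) * ψ' n := by
  have hlow : (C (h (n + 1) / h' n) * ψ' n).degree < (ψ (n + 1)).degree := by
    rw [← smul_eq_C_mul]
    exact (degree_smul_le _ _).trans_lt (by
      rw [hB.degree_right, hB'.degree_right]; exact_mod_cast n.lt_succ_self)
  rw [← sub_eq_iff_eq_add]
  refine hB'.eq_right_of_monic hh' ((hB.monic_right _).sub_of_left hlow)
    ((degree_sub_eq_left_of_degree_lt hlow).trans (hB.degree_right _)) fun k hk => ?_
  have hφ'k := degree_X_sub_C_mul s (hB'.degree_left k)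
  rw [map_sub, hB'B, ← smul_eq_C_mul, map_smul, hB'.apply_eq]
  rcases (Nat.lt_succ_iff.1 hk).lt_or_eq with hk | rfl
  · rw [hB.apply_right_eq_zero_of_degree_lt (by rw [hφ'k]; exact_mod_cast Nat.succ_lt_succ hk),
      if_neg hk.ne, smul_zero, sub_zero]
  · rw [hB.apply_right_of_monic ((monic_X_sub_C s).mul (hB'.monic_left k)) hφ'k, if_pos rfl,
      smul_eq_mul, div_mul_cancel₀ _ (hh' k), sub_self]

end IsMonicBiorthogonal

end Biorthogonal

theorem stmt_6_general
    (B Bs : Polynomial ℂ →ₗ[ℂ] Polynomial ℂ →ₗ[ℂ] ℂ)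
    (τ : ℕ → ℂ)
    (φ ψ : ℕ → Polynomial ℂ)
    (hφm : ∀ n, (φ n).Monic) (hφd : ∀ n : ℕ, (φ n).degree = n)
    (hψm : ∀ n, (ψ n).Monic) (hψd : ∀ n : ℕ, (ψ n).degree = n)
    (hbi : ∀ m n : ℕ, B (φ m) (ψ n) = if m = n then τ (n + 1) / τ n else 0)
    (s : ℂ) (hs : ∀ n, (φ n).eval s ≠ 0)
    (q : ℕ → ℂ) (hq : ∀ n, q n = -((φ (n + 1)).eval s) / ((φ n).eval s))
    (hBs : ∀ p r : Polynomial ℂ, Bs p r = B ((X - C s) * p) r)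
    (φs ψs : ℕ → Polynomial ℂ) (hst : ℕ → ℂ)
    (hφsm : ∀ n, (φs n).Monic) (hφsd : ∀ n : ℕ, (φs n).degree = n)
    (hψsm : ∀ n, (ψs n).Monic) (hψsd : ∀ n : ℕ, (ψs n).degree = n)
    (hstne : ∀ n, hst n ≠ 0)
    (hbis : ∀ m n : ℕ, Bs (φs m) (ψs n) = if m = n then hst n else 0) :
    ∀ n : ℕ, ψ (n + 1) = ψs (n + 1) + C (τ n * τ (n + 2) / (q n * (τ (n + 1)) ^ 2)) * ψs n := by
  intro n
  have hB : IsMonicBiorthogonal B φ ψ fun n => τ (n + 1) / τ n :=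
    ⟨hφm, hφd, hψm, hψd, hbi⟩
  have hB' : IsMonicBiorthogonal Bs φs ψs hst := ⟨hφsm, hφsd, hψsm, hψsd, hbis⟩
  rw [hB.right_succ_eq_add hB' hstne hBs n, hB.const_eq_mul hB' hstne hBs hs n, ← hq]
  congr 3
  simp only [div_eq_mul_inv, mul_inv, inv_inv]
  ring

/-- Geronimus-type relation: `ψ_{n+1} = ψ*_{n+1} + e*_n ψ*_n` with
`e*_n = τ_n τ_{n+2} / (q*_n τ_{n+1}²)`, where `(φ*, ψ*)` is the pair of monic
biorthogonal polynomial sequences for `B*[p, q] = B[(z - s*) p, q]`. -/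
theorem stmt_6
    (B Bs : Polynomial ℂ →ₗ[ℂ] Polynomial ℂ →ₗ[ℂ] ℂ)
    (μ : ℕ → ℕ → ℂ) (hμ : ∀ i j : ℕ, μ i j = B (X ^ i) (X ^ j))
    (τ : ℕ → ℂ)
    (hτ : ∀ n : ℕ, τ n = Matrix.det (Matrix.of fun i j : Fin n => μ (i : ℕ) (j : ℕ)))
    (hτne : ∀ n : ℕ, 1 ≤ n → τ n ≠ 0)
    (φ ψ : ℕ → Polynomial ℂ)
    (hφm : ∀ n, (φ n).Monic) (hφd : ∀ n : ℕ, (φ n).degree = n)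
    (hψm : ∀ n, (ψ n).Monic) (hψd : ∀ n : ℕ, (ψ n).degree = n)
    (hbi : ∀ m n : ℕ, B (φ m) (ψ n) = if m = n then τ (n + 1) / τ n else 0)
    (s : ℂ) (hs : ∀ n, (φ n).eval s ≠ 0)
    (q : ℕ → ℂ) (hq : ∀ n, q n = -((φ (n + 1)).eval s) / ((φ n).eval s))
    (hBs : ∀ p r : Polynomial ℂ, Bs p r = B ((X - C s) * p) r)
    (φs ψs : ℕ → Polynomial ℂ) (hst : ℕ → ℂ)
    (hφsm : ∀ n, (φs n).Monic) (hφsd : ∀ n : ℕ, (φs n).degree = n)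
    (hψsm : ∀ n, (ψs n).Monic) (hψsd : ∀ n : ℕ, (ψs n).degree = n)
    (hstne : ∀ n, hst n ≠ 0)
    (hbis : ∀ m n : ℕ, Bs (φs m) (ψs n) = if m = n then hst n else 0) :
    ∀ n : ℕ, ψ (n + 1) = ψs (n + 1) + C (τ n * τ (n + 2) / (q n * (τ (n + 1)) ^ 2)) * ψs n :=
  stmt_6_general B Bs τ φ ψ hφm hφd hψm hψd hbi s hs q hq hBs φs ψs hst hφsm hφsd hψsm hψsd hstne
    hbis
end

section
/- Let μ_{i,j} (i, j ≥ 0) be complex numbers with determinants τ_0 := 1, τ_n := det(μ_{i,j})_{i,j=0}^{n-1}, and assume τ_n ≠ 0 for all n ≥ 1. For s ∈ ℂ set μ*_{i,j} := μ_{i+1,j} − s·μ_{i,j} and τ*_0 := 1, τ*_n := det(μ*_{i,j})_{i,j=0}^{n-1}. Let φ_n(z) be the monic polynomial defined as (1/τ_n) times the determinant of the (n+1)×(n+1) matrix whose entry in row i (0 ≤ i ≤ n) and column j (0 ≤ j ≤ n−1) is μ_{i,j} and whose last column is (1, z, …, z^n)ᵀ. Then φ_n(s) = (−1)^n τ*_n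 / τ_n for all n ≥ 0. -/
open Polynomial

/-!
Evaluating the last column `(1, z, …, z^n)` at `z = s` and subtracting `s` times row `i` from
row `i + 1` (for all `i` at once, a unimodular row operation) turns the last column into
`(1, 0, …, 0)` and the remaining rows `1, …, n` into `μ*`. Expanding along the last column gives
`(-1)^n τ*_n`.
-/

namespace Matrix

variable {R : Type*} [CommRing R] {n : ℕ}

theorem det_eq_of_col_last_eq_single (B : Matrix (Fin (n + 1)) (Fin (n + 1)) R)
    (hB : ∀ i, B i (Fin.last n) = (Pi.single 0 1 : Fin (n + 1) → R) i) :
    B.det = (-1) ^ n * (B.submatrix Fin.succ Fin.castSucc).det := by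
  rw [det_succ_column B (Fin.last n), Finset.sum_eq_single (0 : Fin (n + 1))]
  · simp [hB]
  · intro i _ hi
    simp [hB, hi]
  · simp

def subShiftedRows (s : R) : Matrix (Fin (n + 1)) (Fin (n + 1)) R :=
  of (Fin.cons (Pi.single 0 1) fun i => Pi.single i.succ 1 - s • Pi.single i.castSucc 1)

variable (s : R)

@[simp]
theorem subShiftedRows_zero : subShiftedRows (n := n) s 0 = Pi.single 0 1 := rfl

@[simp]
theorem subShiftedRows_succ (i : Fin n) :
    subShiftedRows s i.succ = Pi.single i.succ 1 - s • Pi.single i.castSucc 1 := rfl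

theorem det_subShiftedRows : (subShiftedRows (n := n) s).det = 1 := by
  rw [det_of_isLowerTriangular]
  · refine Finset.prod_eq_one fun i _ => ?_
    cases i using Fin.cases <;> simp [(Fin.castSucc_lt_succ).ne']
  · intro i j (hij : i < j)
    cases i using Fin.cases with
    | zero => simp [hij.ne']
    | succ i => simp [hij.ne', ((Fin.castSucc_lt_succ).trans hij).ne']

section
variable (A : Matrix (Fin (n + 1)) (Fin (n + 1)) R)

theorem det_subShiftedRows_mul : (subShiftedRows s * A).det = A.det := by
  rw [det_mul, det_subShiftedRows, one_mul]

theorem subShiftedRows_mul_apply_zero (j) : (subShiftedRows s * A : Matrix _ _ R) 0 j = A 0 j := by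
  simp [mul_apply_eq_vecMul]

theorem subShiftedRows_mul_apply_succ (i : Fin n) (j) :
    (subShiftedRows s * A : Matrix _ _ R) i.succ j = A i.succ j - s * A i.castSucc j := by
  simp [mul_apply_eq_vecMul, sub_vecMul, smul_vecMul]

end

theorem det_of_geometric_last_col (M : ℕ → ℕ → R) :
    (of fun i j : Fin (n + 1) => if (j : ℕ) < n then M i j else s ^ (i : ℕ)).det =
      (-1) ^ n * (of fun i j : Fin n => M (i + 1) j - s * M i j).det := by
  set A : Matrix (Fin (n + 1)) (Fin (n + 1)) R :=
    of fun i j => if (j : ℕ) < n then M i j else s ^ (i : ℕ)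
  have hcol : ∀ i, (subShiftedRows s * A : Matrix _ _ R) i (Fin.last n) =
      (Pi.single 0 1 : Fin (n + 1) → R) i := by
    intro i
    cases i using Fin.cases with
    | zero => simp [subShiftedRows_mul_apply_zero, A]
    | succ i => simp [subShiftedRows_mul_apply_succ, A, pow_succ', Fin.succ_ne_zero]
  rw [← det_subShiftedRows_mul s A, det_eq_of_col_last_eq_single _ hcol]
  congr 2
  ext i j
  simp [subShiftedRows_mul_apply_succ, A]

end Matrix

theorem stmt_7_general
    (μ : ℕ → ℕ → ℂ) (s : ℂ)
    (μs : ℕ → ℕ → ℂ) (hμs : ∀ i j : ℕ, μs i j = μ (i + 1) j - s * μ i j)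
    (τ τs : ℕ → ℂ)
    (hτs : ∀ n : ℕ, τs n = Matrix.det (Matrix.of fun i j : Fin n => μs (i : ℕ) (j : ℕ)))
    (φ : ℕ → Polynomial ℂ)
    (hφ : ∀ n : ℕ, φ n = C (τ n)⁻¹ *
      Matrix.det (Matrix.of fun i j : Fin (n + 1) =>
        if (j : ℕ) < n then C (μ (i : ℕ) (j : ℕ)) else X ^ (i : ℕ))) :
    ∀ n : ℕ, (φ n).eval s = (-1) ^ n * τs n / τ n := by
  intro n
  have heval : eval s (Matrix.of fun i j : Fin (n + 1) =>
      if (j : ℕ) < n then C (μ i j) else X ^ (i : ℕ)).det =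
      (Matrix.of fun i j : Fin (n + 1) => if (j : ℕ) < n then μ i j else s ^ (i : ℕ)).det := by
    rw [← coe_evalRingHom, RingHom.map_det]
    congr 1
    ext i j
    simp only [RingHom.mapMatrix_apply, Matrix.map_apply, Matrix.of_apply]
    split_ifs <;> simp
  rw [hφ, eval_mul, eval_C, heval, Matrix.det_of_geometric_last_col, hτs]
  simp only [hμs]
  ring

/-- Evaluation of the determinant-represented polynomials at the shift parameter:
`φ_n(s) = (-1)^n τ*_n / τ_n`, where `μ*_{i,j} = μ_{i+1,j} - s μ_{i,j}`. -/
theorem stmt_7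
    (μ : ℕ → ℕ → ℂ) (s : ℂ)
    (μs : ℕ → ℕ → ℂ) (hμs : ∀ i j : ℕ, μs i j = μ (i + 1) j - s * μ i j)
    (τ τs : ℕ → ℂ)
    (hτ : ∀ n : ℕ, τ n = Matrix.det (Matrix.of fun i j : Fin n => μ (i : ℕ) (j : ℕ)))
    (hτs : ∀ n : ℕ, τs n = Matrix.det (Matrix.of fun i j : Fin n => μs (i : ℕ) (j : ℕ)))
    (hτne : ∀ n : ℕ, 1 ≤ n → τ n ≠ 0)
    (φ : ℕ → Polynomial ℂ)
    (hφ : ∀ n : ℕ, φ n = C (τ n)⁻¹ *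
      Matrix.det (Matrix.of fun i j : Fin (n + 1) =>
        if (j : ℕ) < n then C (μ (i : ℕ) (j : ℕ)) else X ^ (i : ℕ))) :
    ∀ n : ℕ, (φ n).eval s = (-1) ^ n * τs n / τ n :=
  stmt_7_general μ s μs hμs τ τs hτs φ hφ
end

section
/- Let μ_{i,j} (i, j ≥ 0) be complex numbers and s ∈ ℂ, and set μ'_{i,j} := μ_{i+1,j} − s·μ_{i,j}. For k, l ≥ 0 and n ≥ 0 define τ^{(k,l)}_0 := 1, τ^{(k,l)}_n := det(μ_{k+i, l+j})_{i,j=0}^{n-1}, and τ'^{(k,l)}_0 := 1, τ'^{(k,l)}_n := det(μ'_{k+i, l+j})_{i,j=0}^{n-1}. Then for all k, l ≥ 0 and n ≥ 0 the bilinear identity τ^{(k,l)}_{n+1} · τ'^{(k,l+1)}_{n+1} = τ'^{(k,l)}_{n+1} · τ^{(k,l+1)}_{n+1} + τ^{(k,l)}_{n+2} · τ'^{(k,l+1)}_n holds. -/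
/-!
Write `c_j` for the column `(μ_{k+i,j})_{i ≤ n+1}`, `p` for `(s^i)_{i ≤ n+1}` and `e` for the
last unit vector. Bordering by `e` truncates a column, and bordering by `p` produces `τ'`, since
subtracting `s` times each entry from the next turns `p` into the first unit vector and the `c_j`
into the columns of `μ'`. Hence all six determinants are, up to the same sign `(-1)^n` on both
sides, maximal minors of the matrix `[p, c_l, c_{l+1}, …, c_{l+n}, c_{l+n+1}, e]` containing the
middle columns `c_{l+1}, …, c_{l+n}`, and the identity is the three-term Plücker relation.
-/

namespace Matrix

variable {R : Type*} [CommRing R] {N : ℕ}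

theorem det_of_insertNth (p : Fin (N + 1)) (a : Fin (N + 1) → R)
    (x : Fin N → Fin (N + 1) → R) :
    det (of (p.insertNth a x)) = (-1) ^ (p : ℕ) * det (of (Fin.cons a x)) := by
  have h := det_permute p.cycleRange.symm (of (p.insertNth a x))
  rw [show (of (p.insertNth a x)).submatrix p.cycleRange.symm id = of (Fin.cons a x) by
      ext i j; simp, Equiv.Perm.sign_symm, Fin.sign_cycleRange] at h
  rw [h]
  push_cast
  rw [← mul_assoc, ← mul_pow]
  simp

theorem det_of_cons_cons_swap (x y : Fin (N + 2) → R) (w : Fin N → Fin (N + 2) → R) :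
    det (of (Fin.cons y (Fin.cons x w))) = -det (of (Fin.cons x (Fin.cons y w))) := by
  rw [← Fin.insertNth_zero' x w, ← Fin.insertNth_succ_cons, det_of_insertNth]
  simp

theorem det_of_cons_snoc (x y : Fin (N + 2) → R) (w : Fin N → Fin (N + 2) → R) :
    det (of (Fin.cons x (Fin.snoc w y))) = (-1) ^ N * det (of (Fin.cons x (Fin.cons y w))) := by
  rw [Fin.cons_snoc_eq_snoc_cons, ← Fin.insertNth_last', det_of_insertNth,
    det_of_cons_cons_swap]
  simp [pow_succ]

theorem det_of_snoc_snoc (x y : Fin (N + 2) → R) (w : Fin N → Fin (N + 2) → R) :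
    det (of (Fin.snoc (Fin.snoc w x) y)) = det (of (Fin.cons x (Fin.cons y w))) := by
  rw [← Fin.insertNth_last', det_of_insertNth, det_of_cons_snoc, det_of_cons_cons_swap]
  simp only [Fin.val_last, pow_succ, mul_neg, mul_one, neg_mul, neg_neg, ← mul_assoc, ← mul_pow]
  simp

theorem det_of_snoc_single_last (r : Fin N → Fin (N + 1) → R) :
    det (of (Fin.snoc r (Pi.single (Fin.last N) 1))) = det (of fun i j => r i j.castSucc) := by
  rw [det_succ_row _ (Fin.last N), Finset.sum_eq_single (Fin.last N)]
  · simp only [Fin.succAbove_last, ← two_mul, pow_mul, neg_one_sq, one_pow, one_mul,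
      Fin.val_last, of_apply, Fin.snoc_last, Pi.single_eq_same]
    congr 1
    ext i j
    simp
  · intro j _ hj
    simp [hj]
  · simp

theorem sum_neg_one_pow_mul_det_removeNth_smul_eq_zero (v : Fin (N + 2) → Fin (N + 1) → R) :
    ∑ i : Fin (N + 2), ((-1) ^ (i : ℕ) * det (of (i.removeNth v))) • v i = 0 := by
  ext j
  have h := det_zero_of_column_eq (M := of fun i => Fin.cons (v i j) (v i))
    (Fin.succ_ne_zero j).symm (by simp)
  have hminor (i : Fin (N + 2)) :
      (of fun i => Fin.cons (v i j) (v i)).submatrix i.succAbove Fin.succ = of (i.removeNth v) := by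
    ext; simp [Fin.removeNth]
  rw [det_succ_column_zero] at h
  simpa [Finset.sum_apply, hminor, mul_comm, mul_assoc] using h

/-- The three-term Plücker relation. Applying the
linear form `u ↦ det [a, u, w]`, which kills every `w i`, to the Cramer syzygy among the `N + 3`
vectors `b, c, d, w` leaves exactly three terms. -/
theorem det_of_cons_cons_mul_det_of_cons_cons (a b c d : Fin (N + 2) → R)
    (w : Fin N → Fin (N + 2) → R) :
    det (of (Fin.cons a (Fin.cons c w))) * det (of (Fin.cons b (Fin.cons d w))) =
      det (of (Fin.cons a (Fin.cons b w))) * det (of (Fin.cons c (Fin.cons d w))) +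
        det (of (Fin.cons a (Fin.cons d w))) * det (of (Fin.cons b (Fin.cons c w))) := by
  let φ : (Fin (N + 2) → R) →ₗ[R] R :=
    (detRowAlternating : (Fin (N + 2) → R) [⋀^Fin (N + 2)]→ₗ[R] R).toMultilinearMap
      |>.toLinearMap (Fin.cons a (Fin.cons 0 w)) (Fin.succ 0)
  have hφ (u : Fin (N + 2) → R) : φ u = det (of (Fin.cons a (Fin.cons u w))) := by
    simp only [φ, MultilinearMap.toLinearMap_apply, ← Fin.cons_update, Fin.update_cons_zero]
    rfl
  have hw (i : Fin N) : φ (w i) = 0 := by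
    rw [hφ]
    exact det_zero_of_row_eq (i := Fin.succ 0) (j := i.succ.succ) (by simp [Fin.ext_iff]) rfl
  set v : Fin (N + 3) → Fin (N + 2) → R := Fin.cons b (Fin.cons c (Fin.cons d w))
  have hv1 : (Fin.succ 0 : Fin (N + 3)).removeNth v = Fin.cons b (Fin.cons d w) := by
    ext r : 1
    cases r using Fin.cases <;> simp [v, Fin.removeNth_apply]
  have hv2 : (Fin.succ (Fin.succ 0) : Fin (N + 3)).removeNth v = Fin.cons b (Fin.cons c w) := by
    ext r : 1
    cases r using Fin.cases with
    | zero => rfl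
    | succ r => cases r using Fin.cases <;> rfl
  have key := congrArg φ (sum_neg_one_pow_mul_det_removeNth_smul_eq_zero v)
  simp only [map_sum, map_smul, map_zero, smul_eq_mul] at key
  rw [Fin.sum_univ_succ, Fin.sum_univ_succ, Fin.sum_univ_succ, hv1, hv2] at key
  simp only [Fin.removeNth_zero, Fin.tail_cons, v, Fin.cons_zero, Fin.cons_succ, hw, hφ, mul_zero,
    Finset.sum_const_zero, add_zero, Fin.val_zero, Fin.val_succ] at key
  linear_combination -key

/-- Subtracting `s` times each column from the next turns the first row into `(1, 0, …, 0)`. -/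
theorem det_of_cons_pow_eq_det_sub_mul (s : R) (A : Fin N → Fin (N + 1) → R) :
    det (of (Fin.cons (fun i => s ^ (i : ℕ)) A)) =
      det (of fun j i => A j i.succ - s * A j i.castSucc) := by
  rw [det_eq_of_forall_col_eq_smul_add_pred (fun _ => s) (B := of (Fin.cons (Fin.cons 1 0)
    fun j => Fin.cons (A j 0) fun i => A j i.succ - s * A j i.castSucc))]
  · rw [det_succ_row_zero, Fin.sum_univ_succ]
    simp only [Fin.val_zero, pow_zero, of_apply, Fin.cons_zero, Fin.cons_succ, mul_one, one_mul,
      Fin.succAbove_zero, Pi.zero_apply, mul_zero, zero_mul, Finset.sum_const_zero, add_zero]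
    rfl
  · intro j
    cases j using Fin.cases <;> simp
  · intro j i
    cases j using Fin.cases <;> simp [pow_succ']

end Matrix

theorem Fin.fun_add_eq_cons {α : Type*} (f : ℕ → α) (l m : ℕ) :
    (fun j : Fin (m + 1) => f (l + j)) = Fin.cons (f l) fun j : Fin m => f (l + 1 + j) := by
  ext j
  cases j using Fin.cases <;> simp [add_assoc, add_comm 1]

theorem Fin.fun_add_eq_snoc {α : Type*} (f : ℕ → α) (l m : ℕ) :
    (fun j : Fin (m + 1) => f (l + j)) = Fin.snoc (fun j : Fin m => f (l + j)) (f (l + m)) := by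
  ext j
  cases j using Fin.lastCases <;> simp

open Matrix

section Moments

variable {R : Type*} [CommRing R]

def momentCol (μ : ℕ → ℕ → R) (k N j : ℕ) : Fin N → R := fun i => μ (k + i) j

variable (μ : ℕ → ℕ → R) (k l m : ℕ)

theorem det_moment_eq_det_of_momentCol :
    det (of fun i j : Fin m => μ (k + i) (l + j)) =
      det (of fun j : Fin m => momentCol μ k m (l + j)) :=
  (det_transpose _).symm

theorem det_moment_eq_det_snoc_single_last :
    det (of fun i j : Fin m => μ (k + i) (l + j)) =
      det (of (Fin.snoc (fun j : Fin m => momentCol μ k (m + 1) (l + j))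
        (Pi.single (Fin.last m) 1))) := by
  rw [det_of_snoc_single_last, det_moment_eq_det_of_momentCol]
  rfl

theorem det_shifted_moment_eq_det_cons_pow (s : R) (μ' : ℕ → ℕ → R)
    (hμ' : ∀ i j, μ' i j = μ (i + 1) j - s * μ i j) :
    det (of fun i j : Fin m => μ' (k + i) (l + j)) =
      det (of (Fin.cons (fun i : Fin (m + 1) => s ^ (i : ℕ))
        fun j : Fin m => momentCol μ k (m + 1) (l + j))) := by
  rw [← det_transpose, det_of_cons_pow_eq_det_sub_mul]
  congr 1
  ext j i
  simp [momentCol, hμ', add_assoc]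

theorem det_shifted_moment_eq_det_snoc_single_last (s : R) (μ' : ℕ → ℕ → R)
    (hμ' : ∀ i j, μ' i j = μ (i + 1) j - s * μ i j) :
    det (of fun i j : Fin m => μ' (k + i) (l + j)) =
      det (of (Fin.snoc (Fin.cons (fun i : Fin (m + 2) => s ^ (i : ℕ))
        fun j : Fin m => momentCol μ k (m + 2) (l + j)) (Pi.single (Fin.last (m + 1)) 1))) := by
  rw [det_of_snoc_single_last, det_shifted_moment_eq_det_cons_pow μ k l m s μ' hμ']
  congr 1
  ext i j
  cases i using Fin.cases <;> simp [momentCol]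

end Moments

/-- The bilinear identity underlying equations (nd2d-toda-2):
`τ^{(k,l)}_{n+1} τ'^{(k,l+1)}_{n+1} = τ'^{(k,l)}_{n+1} τ^{(k,l+1)}_{n+1} + τ^{(k,l)}_{n+2} τ'^{(k,l+1)}_n`
for the shifted moment determinants, where `μ'_{i,j} = μ_{i+1,j} - s μ_{i,j}`. -/
theorem stmt_9
    (μ : ℕ → ℕ → ℂ) (s : ℂ)
    (μ' : ℕ → ℕ → ℂ) (hμ' : ∀ i j : ℕ, μ' i j = μ (i + 1) j - s * μ i j)
    (τ τ' : ℕ → ℕ → ℕ → ℂ)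
    (hτ : ∀ k l n : ℕ, τ k l n = Matrix.det (Matrix.of fun i j : Fin n => μ (k + i) (l + j)))
    (hτ' : ∀ k l n : ℕ, τ' k l n = Matrix.det (Matrix.of fun i j : Fin n => μ' (k + i) (l + j))) :
    ∀ k l n : ℕ,
      τ k l (n + 1) * τ' k (l + 1) (n + 1)
        = τ' k l (n + 1) * τ k (l + 1) (n + 1) + τ k l (n + 2) * τ' k (l + 1) n := by
  intro k l n
  set col := momentCol μ k (n + 2)
  set w : Fin n → Fin (n + 2) → ℂ := fun j => col (l + 1 + j)
  set p : Fin (n + 2) → ℂ := fun i => s ^ (i : ℕ)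
  set e : Fin (n + 2) → ℂ := Pi.single (Fin.last (n + 1)) 1
  set F : (Fin (n + 2) → ℂ) → (Fin (n + 2) → ℂ) → ℂ :=
    fun x y => det (of (Fin.cons x (Fin.cons y w)))
  have h1 : τ k l (n + 1) = (-1) ^ n * F (col l) e := by
    rw [hτ, det_moment_eq_det_snoc_single_last, Fin.fun_add_eq_cons col,
      ← Fin.cons_snoc_eq_snoc_cons, det_of_cons_snoc]
  have h2 : τ' k (l + 1) (n + 1) = (-1) ^ n * F p (col (l + 1 + n)) := by
    rw [hτ', det_shifted_moment_eq_det_cons_pow μ k _ _ s μ' hμ', Fin.fun_add_eq_snoc col,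
      det_of_cons_snoc]
  have h3 : τ' k l (n + 1) = F p (col l) := by
    rw [hτ', det_shifted_moment_eq_det_cons_pow μ k _ _ s μ' hμ', Fin.fun_add_eq_cons col]
  have h4 : τ k (l + 1) (n + 1) = F (col (l + 1 + n)) e := by
    rw [hτ, det_moment_eq_det_snoc_single_last, Fin.fun_add_eq_snoc col, det_of_snoc_snoc]
  have h5 : τ k l (n + 2) = (-1) ^ n * F (col l) (col (l + 1 + n)) := by
    rw [hτ, det_moment_eq_det_of_momentCol, Fin.fun_add_eq_cons col,
      Fin.fun_add_eq_snoc col (l + 1), det_of_cons_snoc]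
  have h6 : τ' k (l + 1) n = (-1) ^ n * F p e := by
    rw [hτ', det_shifted_moment_eq_det_snoc_single_last μ k _ _ s μ' hμ',
      ← Fin.cons_snoc_eq_snoc_cons, det_of_cons_snoc]
  have hsq : ((-1 : ℂ) ^ n) ^ 2 = 1 := by rw [← pow_mul, pow_mul', neg_one_sq, one_pow]
  rw [h1, h2, h3, h4, h5, h6]
  linear_combination det_of_cons_cons_mul_det_of_cons_cons p (col l) (col (l + 1 + n)) e w +
    (F (col l) e * F p (col (l + 1 + n)) - F (col l) (col (l + 1 + n)) * F p e) * hsq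
end

section
/- Let M ≥ 1 and let B be a bilinear form on ℂ[z] satisfying B[z^{i+M}, z^j] = B[z^i, z^{j+1}] for all i, j ≥ 0. Define the linear functional L : ℂ[z] → ℂ by L[p] := B[p, 1]. If ({φ_n}, {ψ_n}) is a pair of monic biorthogonal polynomial sequences with respect to B with biorthogonality constants h_n, then the (M,1)-biorthogonal relation L[φ_m(z) · ψ_n(z^M)] = h_n δ_{m,n} holds for all m, n ≥ 0. -/
/-!
The shift relation `B[z^{i+M}, z^j] = B[z^i, z^{j+1}]` says that multiplying the left argument by
`z^M` is the same as multiplying the right argument by `z`. Iterating, multiplying the left argument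
by `q(z^M)` amounts to multiplying the right one by `q(z)`, so
`L[φ_m(z) ψ_n(z^M)] = B[φ_m(z) ψ_n(z^M), 1] = B[φ_m, ψ_n]`, and biorthogonality finishes.
-/

open Polynomial

section ShiftRelation

variable {R N : Type*} [CommSemiring R] [AddCommMonoid N] [Module R N]
  (B : R[X] →ₗ[R] R[X] →ₗ[R] N) {M : ℕ}
  (hred : ∀ i j : ℕ, B (X ^ (i + M)) (X ^ j) = B (X ^ i) (X ^ (j + 1)))
include hred

theorem bilin_mul_X_pow_left (p q : R[X]) : B (p * X ^ M) q = B p (X * q) := by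
  induction p using Polynomial.induction_on' with
  | add p r hp hr => simp only [add_mul, map_add, LinearMap.add_apply, hp, hr]
  | monomial i a =>
    induction q using Polynomial.induction_on' with
    | add q r hq hr => simp only [mul_add, map_add, hq, hr]
    | monomial j b =>
      simp only [← C_mul_X_pow_eq_monomial, ← smul_eq_C_mul, smul_mul_assoc,
        mul_smul_comm, map_smul, LinearMap.smul_apply, ← pow_add]
      rw [hred i j, pow_succ']

theorem bilin_mul_comp_X_pow_left (p q r : R[X]) :
    B (p * q.comp (X ^ M)) r = B p (q * r) := by
  induction q using Polynomial.induction_on generalizing r with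
  | C a => simp only [C_comp, mul_comm p, ← smul_eq_C_mul, map_smul, LinearMap.smul_apply]
  | add q₁ q₂ h₁ h₂ => simp only [add_comp, mul_add, add_mul, map_add, LinearMap.add_apply, h₁, h₂]
  | monomial n a ih =>
    have hcomp : (C a * X ^ (n + 1)).comp (X ^ M) = (C a * X ^ n).comp (X ^ M) * X ^ M := by
      rw [pow_succ, ← mul_assoc, mul_comp, X_comp]
    rw [hcomp, ← mul_assoc, bilin_mul_X_pow_left B hred, ih, pow_succ]
    congr 1
    ring

end ShiftRelation

theorem stmt_11_general
    (M : ℕ)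
    (B : Polynomial ℂ →ₗ[ℂ] Polynomial ℂ →ₗ[ℂ] ℂ)
    (hred : ∀ i j : ℕ, B (X ^ (i + M)) (X ^ j) = B (X ^ i) (X ^ (j + 1)))
    (L : Polynomial ℂ →ₗ[ℂ] ℂ) (hL : ∀ p : Polynomial ℂ, L p = B p 1)
    (φ ψ : ℕ → Polynomial ℂ) (h : ℕ → ℂ)
    (hbi : ∀ m n : ℕ, B (φ m) (ψ n) = if m = n then h n else 0) :
    ∀ m n : ℕ, L (φ m * (ψ n).comp (X ^ M)) = if m = n then h n else 0 := by
  intro m n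
  rw [hL, bilin_mul_comp_X_pow_left B hred, mul_one, hbi]

/-- The (M,1)-reduction: if `B[z^{i+M}, z^j] = B[z^i, z^{j+1}]` and `L[p] := B[p, 1]`,
then the pair of monic biorthogonal polynomial sequences for `B` satisfies the
(M,1)-biorthogonal relation `L[φ_m(z) ψ_n(z^M)] = h_n δ_{m,n}`. -/
theorem stmt_11
    (M : ℕ) (hM : 1 ≤ M)
    (B : Polynomial ℂ →ₗ[ℂ] Polynomial ℂ →ₗ[ℂ] ℂ)
    (hred : ∀ i j : ℕ, B (X ^ (i + M)) (X ^ j) = B (X ^ i) (X ^ (j + 1)))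
    (L : Polynomial ℂ →ₗ[ℂ] ℂ) (hL : ∀ p : Polynomial ℂ, L p = B p 1)
    (φ ψ : ℕ → Polynomial ℂ) (h : ℕ → ℂ)
    (hφm : ∀ n, (φ n).Monic) (hφd : ∀ n : ℕ, (φ n).degree = n)
    (hψm : ∀ n, (ψ n).Monic) (hψd : ∀ n : ℕ, (ψ n).degree = n)
    (hne : ∀ n, h n ≠ 0)
    (hbi : ∀ m n : ℕ, B (φ m) (ψ n) = if m = n then h n else 0) :
    ∀ m n : ℕ, L (φ m * (ψ n).comp (X ^ M)) = if m = n then h n else 0 :=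
  stmt_11_general M B hred L hL φ ψ h hbi
end

section
/- Let M ≥ 1, N ≥ 1, let L : ℂ[z] → ℂ be a linear functional, and let ψ be a monic polynomial of degree N whose zeros z_0, z_1, …, z_{N−1} are pairwise distinct and nonzero (equivalently, the polynomial z ↦ ψ(z^M) of degree MN has MN simple zeros). Suppose L[z^m · ψ(z^M)] = 0 for every integer m ≥ 0. Then, for any fixed choice of an M-th root ζ_r of z_r for each r, there exist complex numbers w_{r,ν} (0 ≤ r ≤ N−1, 0 ≤ ν ≤ M−1) such that for every polynomial π ∈ ℂ[z]: L[π] = Σ_{r=0}^{N−1} Σ_{ν=0}^{M−1} w_{r,ν} · π(ζ_r · e^{−2πiν/M}). -/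
open Polynomial

/-!
A functional that annihilates every multiple of `Ψ(z) = ψ(z^M)` factors through division by `Ψ`,
so it only sees remainders, which have degree `< MN`. The `MN` points `ζ_r ω^ν` (with
`ω = e^{-2πi/M}` a primitive `M`-th root of unity) are distinct zeros of `Ψ`, so a remainder is the
Lagrange interpolant of its values there, which coincide with those of `p`; the weights are the
values of `L` on the Lagrange basis.
-/

section Quadrature

variable {F ι : Type*} [Field F] [Fintype ι] [DecidableEq ι]

theorem LinearMap.map_mul_eq_zero_of_map_X_pow_mul_eq_zero (L : F[X] →ₗ[F] F) {Ψ : F[X]}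
    (hL : ∀ m : ℕ, L (X ^ m * Ψ) = 0) (q : F[X]) : L (Ψ * q) = 0 := by
  induction q using Polynomial.induction_on' with
  | add p q hp hq => rw [mul_add, map_add, hp, hq, add_zero]
  | monomial n a =>
    rw [← C_mul_X_pow_eq_monomial, show Ψ * (C a * X ^ n) = a • (X ^ n * Ψ) by
      rw [smul_eq_C_mul]; ring, map_smul, hL n, smul_zero]

theorem LinearMap.eq_sum_basis_mul_eval_of_map_mul_eq_zero (L : F[X] →ₗ[F] F) {Ψ : F[X]}
    (hΨ : Ψ.Monic) (hL : ∀ q, L (Ψ * q) = 0) {x : ι → F} (hx : Function.Injective x)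
    (hroot : ∀ i, Ψ.IsRoot (x i)) (hdeg : Ψ.natDegree ≤ Fintype.card ι) (p : F[X]) :
    L p = ∑ i, L (Lagrange.basis Finset.univ x i) * p.eval (x i) := by
  have hdiv := modByMonic_add_div p Ψ
  have hLp : L p = L (p %ₘ Ψ) := by
    conv_lhs => rw [← hdiv]
    rw [map_add, hL, add_zero]
  have heval : ∀ i, (p %ₘ Ψ).eval (x i) = p.eval (x i) := fun i => by
    conv_rhs => rw [← hdiv]
    rw [eval_add, eval_mul, (hroot i).eq_zero, zero_mul, add_zero]
  have hdeg_lt : (p %ₘ Ψ).degree < (Finset.univ : Finset ι).card :=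
    calc (p %ₘ Ψ).degree < Ψ.degree := degree_modByMonic_lt p hΨ
      _ ≤ _ := by rw [degree_eq_natDegree hΨ.ne_zero, Finset.card_univ]; exact_mod_cast hdeg
  rw [hLp, Lagrange.eq_interpolate hx.injOn hdeg_lt, Lagrange.interpolate_apply, map_sum]
  refine Finset.sum_congr rfl fun i _ => ?_
  rw [← smul_eq_C_mul, map_smul, smul_eq_mul, heval, mul_comm]

end Quadrature

theorem injective_mul_pow_of_isPrimitiveRoot {K ι : Type*} [CommRing K] [IsDomain K] {ω : K}
    {M : ℕ} (hω : IsPrimitiveRoot ω M) {ζ : ι → K} (hζ0 : ∀ r, ζ r ≠ 0)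
    (hζinj : Function.Injective fun r => ζ r ^ M) :
    Function.Injective fun j : ι × Fin M => ζ j.1 * ω ^ (j.2 : ℕ) := by
  rintro ⟨r, ν⟩ ⟨s, μ⟩ h
  have hrs : r = s := hζinj <| by
    simpa [mul_pow, ← pow_mul, pow_mul', hω.pow_eq_one] using congrArg (· ^ M) h
  subst hrs
  have hνμ : (ν : ℕ) = μ := hω.pow_inj ν.isLt μ.isLt (mul_left_cancel₀ (hζ0 r) h)
  rw [Fin.ext hνμ]

theorem Complex.exp_neg_two_pi_I_mul_div_eq_pow (ν M : ℕ) :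
    Complex.exp (-(2 * Real.pi * Complex.I * ν) / M) =
      (Complex.exp (2 * Real.pi * Complex.I / M))⁻¹ ^ ν := by
  rw [← Complex.exp_neg, ← Complex.exp_nat_mul]
  ring_nf

theorem stmt_12_general
    (M N : ℕ) (hM : 1 ≤ M)
    (L : Polynomial ℂ →ₗ[ℂ] ℂ)
    (z : Fin N → ℂ) (hzinj : Function.Injective z) (hz0 : ∀ r, z r ≠ 0)
    (ψ : Polynomial ℂ) (hψ : ψ = ∏ r : Fin N, (X - C (z r)))
    (horth : ∀ m : ℕ, L (X ^ m * ψ.comp (X ^ M)) = 0)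
    (ζ : Fin N → ℂ) (hζ : ∀ r, ζ r ^ M = z r) :
    ∃ w : Fin N → Fin M → ℂ, ∀ p : Polynomial ℂ,
      L p = ∑ r : Fin N, ∑ ν : Fin M,
        w r ν * p.eval (ζ r * Complex.exp (-(2 * (Real.pi : ℂ) * Complex.I * ((ν : ℕ) : ℂ)) / (M : ℂ))) := by
  classical
  set ω := (Complex.exp (2 * Real.pi * Complex.I / M))⁻¹
  have hω : IsPrimitiveRoot ω M := (Complex.isPrimitiveRoot_exp M (by omega)).inv
  set x : Fin N × Fin M → ℂ := fun j => ζ j.1 * ω ^ (j.2 : ℕ)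
  have hx : Function.Injective x := injective_mul_pow_of_isPrimitiveRoot hω
    (fun r h => hz0 r (by rw [← hζ r, h, zero_pow (by omega)])) (by simpa only [hζ] using hzinj)
  have hψmonic : ψ.Monic := hψ ▸ monic_prod_of_monic _ _ fun r _ => monic_X_sub_C (z r)
  have hψdeg : ψ.natDegree = N := by simp [hψ, natDegree_prod _ _ fun r _ => X_sub_C_ne_zero (z r)]
  have hroot : ∀ j, (ψ.comp (X ^ M)).IsRoot (x j) := fun ⟨r, ν⟩ => by
    simp [x, hψ, mul_pow, ← pow_mul, pow_mul', hω.pow_eq_one, hζ, eval_prod,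
      Finset.prod_eq_zero_iff]
    exact ⟨r, sub_self _⟩
  refine ⟨fun r ν => L (Lagrange.basis Finset.univ x (r, ν)), fun p => ?_⟩
  rw [L.eq_sum_basis_mul_eval_of_map_mul_eq_zero
    (hψmonic.comp (monic_X_pow M) (by rw [natDegree_X_pow]; omega))
    (L.map_mul_eq_zero_of_map_X_pow_mul_eq_zero horth) hx hroot
    (by simp [natDegree_comp, hψdeg]) p, Fintype.sum_prod_type]
  simp only [x, ω, Complex.exp_neg_two_pi_I_mul_div_eq_pow]

/-- Analogue of Gauss quadrature for (M,1)-biorthogonal polynomials: if `L` annihilates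
`z^m ψ(z^M)` for all `m ≥ 0`, where `ψ` is monic of degree `N` with pairwise distinct
nonzero zeros `z_r`, then `L` is a finite sum of evaluations at the `M`-th roots
`ζ_r e^{-2πiν/M}` of the `z_r`. -/
theorem stmt_12
    (M N : ℕ) (hM : 1 ≤ M) (hN : 1 ≤ N)
    (L : Polynomial ℂ →ₗ[ℂ] ℂ)
    (z : Fin N → ℂ) (hzinj : Function.Injective z) (hz0 : ∀ r, z r ≠ 0)
    (ψ : Polynomial ℂ) (hψ : ψ = ∏ r : Fin N, (X - C (z r)))
    (horth : ∀ m : ℕ, L (X ^ m * ψ.comp (X ^ M)) = 0)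
    (ζ : Fin N → ℂ) (hζ : ∀ r, ζ r ^ M = z r) :
    ∃ w : Fin N → Fin M → ℂ, ∀ p : Polynomial ℂ,
      L p = ∑ r : Fin N, ∑ ν : Fin M,
        w r ν * p.eval (ζ r * Complex.exp (-(2 * (Real.pi : ℂ) * Complex.I * ((ν : ℕ) : ℂ)) / (M : ℂ))) :=
  stmt_12_general M N hM L z hzinj hz0 ψ hψ horth ζ hζ
end

section
/- Let M ≥ 1, N ≥ 1, let ζ_0, …, ζ_{N−1} be complex numbers, let s^{(0)}, s^{(1)}, s^{(2)}, … be complex numbers, and let w_r^{(m)} (0 ≤ r ≤ N−1, m ∈ ℤ) be complex numbers satisfying w_r^{(m+M)} = w_r^{(m)} for all m. For t ≥ 0 define μ^{(t)}_m := Σ_{r=0}^{N−1} w_r^{(m)} · ζ_r^m · Π_{τ=0}^{t−1}(ζ_r^M − s^{(τ)}) for m ≥ 0, and for k ≥ 0, 0 ≤ n ≤ N define τ^{(k,t)}_0 := 1, τ^{(k,t)}_n := det(μ^{(t)}_{k+i+Mj})_{i,j=0}^{n-1}. Then τ^{(k,t)}_n = Σ_{0 ≤ r_0 < r_1 < … <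 r_{n−1} ≤ N−1} V^{(k)}_{r_0,…,r_{n−1}} · Π_{j=0}^{n−1} ( ζ_{r_j}^k · Π_{τ=0}^{t−1}(ζ_{r_j}^M − s^{(τ)}) ) · Π_{0 ≤ i < j ≤ n−1} (ζ_{r_j}^M − ζ_{r_i}^M), where V^{(k)}_{r_0,…,r_{n−1}} := det( w_{r_l}^{(k+i)} · ζ_{r_l}^i )_{i,l=0}^{n-1}. -/
/-! Writing `z_r = ζ_r ^ M`, periodicity of `w` lets the moment `μ^{(t)}_{k+i+Mj}` factor as
`∑_r A_{ir} B_{rj}` with `A_{ir} = w_r^{(k+i)} ζ_r^i` and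
`B_{rj} = ζ_r^k ∏_τ (z_r - s^{(τ)}) · z_r^j`. The Cauchy–Binet formula expands `det (A B)` over
the increasing `n`-tuples `r`, and each minor of `B` is a row-scaled Vandermonde determinant
in the `z_{r_j}`. -/

open scoped Classical

namespace Tuple

theorem sort_comp_perm_of_strictMono {α : Type*} [LinearOrder α] {n : ℕ} {r : Fin n → α}
    (hr : StrictMono r) (σ : Equiv.Perm (Fin n)) : sort (r ∘ σ) = σ⁻¹ := by
  refine (eq_sort_iff.2 ⟨?_, fun i j hij h => absurd (hr.injective ?_) hij.ne⟩).symm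
  · simpa [Function.comp_def] using hr.monotone
  · simpa using h

end Tuple

open Finset

theorem Finset.sum_injective_eq_sum_strictMono_sum_perm {α β : Type*} [Fintype α]
    [LinearOrder α] [AddCommMonoid β] {n : ℕ} (f : (Fin n → α) → β) :
    ∑ p ∈ univ.filter Function.Injective, f p
      = ∑ r ∈ univ.filter StrictMono, ∑ σ : Equiv.Perm (Fin n), f (r ∘ σ) := by
  rw [← sum_product']
  refine sum_nbij' (fun p => (p ∘ Tuple.sort p, (Tuple.sort p)⁻¹)) (fun q => q.1 ∘ q.2)
    ?_ ?_ ?_ ?_ ?_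
  · intro p hp
    simp only [mem_filter, mem_product, mem_univ, true_and, and_true] at hp ⊢
    exact (Tuple.monotone_sort p).strictMono_of_injective (hp.comp (Tuple.sort p).injective)
  · intro q hq
    simp only [mem_filter, mem_product, mem_univ, true_and, and_true] at hq ⊢
    exact hq.injective.comp q.2.injective
  · intro p _
    ext i
    simp
  · intro q hq
    simp only [mem_filter, mem_product, mem_univ, true_and, and_true] at hq
    rw [Tuple.sort_comp_perm_of_strictMono hq, inv_inv]
    ext i <;> simp
  · intro p _
    congr
    ext i
    simp

namespace Matrix

variable {m ι R : Type*} [Fintype m] [DecidableEq m] [Fintype ι] [CommRing R]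

theorem det_mul_eq_sum_det_submatrix (A : Matrix m ι R) (B : Matrix ι m R) :
    (A * B).det = ∑ p : m → ι, (∏ i, A i (p i)) * (B.submatrix p id).det := by
  have hrows : A * B = fun i => ∑ r, A i r • B r := by
    ext i j
    simp [mul_apply, Finset.sum_apply]
  change (detRowAlternating (R := R) (n := m)).toMultilinearMap (A * B) = _
  rw [hrows, (detRowAlternating (R := R) (n := m)).toMultilinearMap.map_sum
    (fun i r => A i r • B r)]
  refine sum_congr rfl fun p _ => ?_
  rw [MultilinearMap.map_smul_univ, smul_eq_mul]
  rfl

theorem det_mul_eq_sum_injective [DecidableEq ι] (A : Matrix m ι R) (B : Matrix ι m R) :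
    (A * B).det
      = ∑ p ∈ univ.filter Function.Injective, (∏ i, A i (p i)) * (B.submatrix p id).det := by
  rw [det_mul_eq_sum_det_submatrix, ← sum_filter_add_sum_filter_not univ Function.Injective,
    add_eq_left]
  refine sum_eq_zero fun p hp => ?_
  obtain ⟨i, j, hij, hne⟩ : ∃ i j, p i = p j ∧ i ≠ j := by
    simpa [Function.Injective] using hp
  rw [det_zero_of_row_eq hne (funext fun c => by simp [hij]), mul_zero]

theorem det_mul_eq_sum_strictMono [LinearOrder ι] {n : ℕ} (A : Matrix (Fin n) ι R)
    (B : Matrix ι (Fin n) R) :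
    (A * B).det
      = ∑ r ∈ univ.filter StrictMono, (A.submatrix id r).det * (B.submatrix r id).det := by
  rw [det_mul_eq_sum_injective,
    sum_injective_eq_sum_strictMono_sum_perm fun p => (∏ i, A i (p i)) * (B.submatrix p id).det]
  refine sum_congr rfl fun r _ => ?_
  calc ∑ σ : Equiv.Perm (Fin n), (∏ i, A i ((r ∘ σ) i)) * (B.submatrix (r ∘ σ) id).det
      = ∑ σ : Equiv.Perm (Fin n),
          (Equiv.Perm.sign σ * ∏ i, (A.submatrix id r)ᵀ (σ i) i) * (B.submatrix r id).det := by
        refine sum_congr rfl fun σ _ => ?_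
        rw [show B.submatrix (r ∘ σ) id = (B.submatrix r id).submatrix σ id from rfl,
          det_permute]
        simp only [Function.comp_apply, transpose_apply, submatrix_apply, id_eq]
        ring
    _ = (A.submatrix id r).det * (B.submatrix r id).det := by
        rw [← sum_mul, ← det_transpose (A.submatrix id r), det_apply' (A.submatrix id r)ᵀ]

theorem det_mul_column_vandermonde {n : ℕ} (c v : Fin n → R) :
    (of fun i j : Fin n => c i * v i ^ (j : ℕ)).det
      = (∏ i, c i) * ∏ j, ∏ i ∈ univ.filter (· < j), (v j - v i) := by
  rw [show (of fun i j : Fin n => c i * v i ^ (j : ℕ)) = of fun i j => c i * vandermonde v i j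
    from rfl, det_mul_column, det_vandermonde]
  congr 1
  exact prod_comm' fun i j => by simp [and_comm]

end Matrix

theorem stmt_13_general
    (M N : ℕ)
    (ζ : Fin N → ℂ) (s : ℕ → ℂ)
    (w : Fin N → ℤ → ℂ) (hwper : ∀ (r : Fin N) (m : ℤ), w r (m + M) = w r m)
    (μ : ℕ → ℕ → ℂ)
    (hμ : ∀ t m : ℕ, μ t m = ∑ r : Fin N, w r (m : ℤ) * ζ r ^ m *
      ∏ τ' ∈ Finset.range t, (ζ r ^ M - s τ'))
    (τ : ℕ → ℕ → ℕ → ℂ)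
    (hτ : ∀ k t n : ℕ,
      τ k t n = Matrix.det (Matrix.of fun i j : Fin n => μ t (k + i + M * j))) :
    ∀ k t n : ℕ, n ≤ N →
      τ k t n = ∑ r ∈ Finset.univ.filter (fun r : Fin n → Fin N => StrictMono r),
        Matrix.det (Matrix.of fun i l : Fin n =>
            w (r l) ((k : ℤ) + (i : ℕ)) * ζ (r l) ^ (i : ℕ)) *
          (∏ j : Fin n, (ζ (r j) ^ k * ∏ τ' ∈ Finset.range t, (ζ (r j) ^ M - s τ'))) *
          ∏ j : Fin n, ∏ i ∈ Finset.univ.filter (fun i : Fin n => i < j),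
            (ζ (r j) ^ M - ζ (r i) ^ M) := by
  intro k t n _
  set P : Fin N → ℂ := fun r => ∏ τ' ∈ Finset.range t, (ζ r ^ M - s τ')
  have hfactor : (Matrix.of fun i j : Fin n => μ t (k + i + M * j))
      = Matrix.of (fun (i : Fin n) r => w r ((k : ℤ) + (i : ℕ)) * ζ r ^ (i : ℕ))
        * Matrix.of (fun r (j : Fin n) => (ζ r ^ k * P r) * (ζ r ^ M) ^ (j : ℕ)) := by
    ext i j
    rw [Matrix.of_apply, hμ, Matrix.mul_apply]
    refine sum_congr rfl fun r _ => ?_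
    have hw : w r ((k + i + M * j : ℕ) : ℤ) = w r ((k : ℤ) + (i : ℕ)) := by
      simpa [mul_comm] using (Function.Periodic.nat_mul (hwper r) j) ((k : ℤ) + (i : ℕ))
    simp only [Matrix.of_apply, hw]
    ring
  rw [hτ, hfactor, Matrix.det_mul_eq_sum_strictMono]
  refine sum_congr rfl fun r _ => ?_
  rw [mul_assoc, ← Matrix.det_mul_column_vandermonde]
  rfl

/-- Binet–Cauchy/Vandermonde expansion of the tau functions of the nonautonomous discrete
hungry Toda lattice (equation (tau-expanded-v) of the paper). -/
theorem stmt_13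
    (M N : ℕ) (hM : 1 ≤ M) (hN : 1 ≤ N)
    (ζ : Fin N → ℂ) (s : ℕ → ℂ)
    (w : Fin N → ℤ → ℂ) (hwper : ∀ (r : Fin N) (m : ℤ), w r (m + M) = w r m)
    (μ : ℕ → ℕ → ℂ)
    (hμ : ∀ t m : ℕ, μ t m = ∑ r : Fin N, w r (m : ℤ) * ζ r ^ m *
      ∏ τ' ∈ Finset.range t, (ζ r ^ M - s τ'))
    (τ : ℕ → ℕ → ℕ → ℂ)
    (hτ : ∀ k t n : ℕ,
      τ k t n = Matrix.det (Matrix.of fun i j : Fin n => μ t (k + i + M * j))) :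
    ∀ k t n : ℕ, n ≤ N →
      τ k t n = ∑ r ∈ Finset.univ.filter (fun r : Fin n → Fin N => StrictMono r),
        Matrix.det (Matrix.of fun i l : Fin n =>
            w (r l) ((k : ℤ) + (i : ℕ)) * ζ (r l) ^ (i : ℕ)) *
          (∏ j : Fin n, (ζ (r j) ^ k * ∏ τ' ∈ Finset.range t, (ζ (r j) ^ M - s τ'))) *
          ∏ j : Fin n, ∏ i ∈ Finset.univ.filter (fun i : Fin n => i < j),
            (ζ (r j) ^ M - ζ (r i) ^ M) :=
  stmt_13_general M N ζ s w hwper μ hμ τ hτ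
end

section
/- Let M ≥ 1, N ≥ 1, let ζ_0, …, ζ_{N−1} be nonzero real (or complex) numbers, and let w_r^{(m)} (0 ≤ r ≤ N−1, m ∈ ℤ) be given. For strictly increasing tuples (r_0, …, r_{n−1}) of indices define recursively, for n ≥ 2 and all m ∈ ℤ: w^{(m+1)}_{r_0,…,r_{n−3},r_{n−2},r_{n−1}} := ( w^{(m)}_{r_0,…,r_{n−3},r_{n−2}} · w^{(m+1)}_{r_0,…,r_{n−3},r_{n−1}} · ζ_{r_{n−1}} − w^{(m+1)}_{r_0,…,r_{n−3},r_{n−2}} · w^{(m)}_{r_0,…,r_{n−3},r_{n−1}} · ζ_{r_{n−2}} ) / w^{(m)}_{r_0,…,r_{n−3},r_{n−2}}, assuming every denominator appearing is nonzero. Then for every k ∈ ℤ and every strictly increasing tuple (r_0, …, r_{n−1}): det( w_{r_l}^{(k+i)} · ζ_{r_l}^i )_{i,l=0}^{n-1} = w_{r_0}^{(k)} · w_{r_0,r_1}^{(k+1)} · w_{r_0,r_1,r_2}^{(k+2)} ⋯ w_{r_0,r_1,…,r_{n−1}}^{(k+n−1)}. -/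
/-!
Gauss elimination on rows. Subtracting from row `i + 1` of `V^{(k)}_{r_0,…,r_{n-1}}` the multiple
`w_{r_0}^{(k+i+1)} ζ_{r_0} / w_{r_0}^{(k+i)}` of row `i` clears the first column below the pivot
`w_{r_0}^{(k)}` and leaves, in the other columns, `ζ_{r_l}^i w_{r_0,r_l}^{(k+i+1)}`: a matrix of the
same shape for the tuple `r_1,…,r_{n-1}` and the weights `w_{r_0,x}`. The table `W` restricted
to tuples beginning with `r_0` obeys the same recursion over these weights, so induction on `n`
applies.
-/

open Matrix

variable {K ι : Type*}

section genVandermonde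

variable [CommRing K]

def genVandermonde {n : ℕ} (ζ : ι → K) (w : ι → ℤ → K) (k : ℤ) (r : Fin n → ι) :
    Matrix (Fin n) (Fin n) K :=
  of fun i l => w (r l) (k + (i : ℕ)) * ζ (r l) ^ (i : ℕ)

end genVandermonde

variable [Field K]

theorem det_genVandermonde_eq_mul_det_tail {n : ℕ} (ζ : ι → K) (w w' : ι → ℤ → K) (k : ℤ)
    (r : Fin (n + 1) → ι) (h0 : ∀ i : Fin n, w (r 0) (k + (i : ℕ)) ≠ 0)
    (hw' : ∀ (l : Fin n) (m : ℤ), w' (r l.succ) (m + 1) =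
      (w (r 0) m * w (r l.succ) (m + 1) * ζ (r l.succ) -
        w (r 0) (m + 1) * w (r l.succ) m * ζ (r 0)) / w (r 0) m) :
    (genVandermonde ζ w k r).det = w (r 0) k * (genVandermonde ζ w' (k + 1) (Fin.tail r)).det := by
  set A := genVandermonde ζ w k r
  set c : Fin n → K := fun i => w (r 0) (k + (i : ℕ) + 1) * ζ (r 0) / w (r 0) (k + (i : ℕ))
  set B : Matrix (Fin (n + 1)) (Fin (n + 1)) K :=
    Fin.cons (A 0) fun i => A i.succ - c i • A i.castSucc
  have hAB : A.det = B.det :=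
    det_eq_of_forall_row_eq_smul_add_pred c (fun j => rfl) (fun i j => by simp [B])
  have hB0 : ∀ i : Fin n, B i.succ 0 = 0 := by
    intro i
    simp only [B, A, c, genVandermonde, Fin.cons_succ, Pi.sub_apply, Pi.smul_apply, of_apply,
      smul_eq_mul, Fin.val_succ, Fin.val_castSucc]
    field_simp [h0 i]
    push_cast
    ring_nf
  have hBsucc : B.submatrix Fin.succ Fin.succ = genVandermonde ζ w' (k + 1) (Fin.tail r) := by
    ext i l
    change B i.succ l.succ = _
    simp only [B, A, c, genVandermonde, Fin.cons_succ, Pi.sub_apply,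
      Pi.smul_apply, of_apply, smul_eq_mul, Fin.val_succ, Fin.val_castSucc, Fin.tail]
    rw [show k + 1 + ((i : ℕ) : ℤ) = k + (i : ℕ) + 1 by ring, hw']
    field_simp [h0 i]
    push_cast
    ring_nf
  rw [hAB, det_succ_column_zero, Fin.sum_univ_succ]
  simp only [hB0, mul_zero, zero_mul, Finset.sum_const_zero, add_zero, Fin.succAbove_zero, hBsucc]
  simp [B, A, genVandermonde]

theorem Fin.init_cons {α : Type*} {n : ℕ} (a : α) (r : Fin (n + 1) → α) :
    Fin.init (Fin.cons a r : Fin (n + 2) → α) = Fin.cons a (Fin.init r) := by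
  funext i
  cases i using Fin.cases <;> rfl

theorem Fin.removeNth_succ_cons {α : Type*} {n : ℕ} (a : α) (p : Fin (n + 1))
    (r : Fin (n + 1) → α) :
    Fin.removeNth p.succ (Fin.cons a r : Fin (n + 2) → α) = Fin.cons a (Fin.removeNth p r) := by
  funext i
  cases i using Fin.cases <;> simp [Fin.removeNth_apply, Fin.succ_succAbove_succ]

theorem Fin.removeNth_castSucc_last {α : Type*} {n : ℕ} (r : Fin (n + 2) → α) :
    Fin.removeNth (Fin.last n).castSucc r =
      fun i => if i = Fin.last n then r (Fin.last (n + 1)) else r i.castSucc := by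
  funext i
  rcases Fin.eq_castSucc_or_eq_last i with ⟨j, rfl⟩ | rfl <;> simp [Fin.removeNth_apply]

/-- `W n r m` plays the role of `w^{(m)}_{r_0,…,r_{n-1}}`; `Fin.removeNth (Fin.last n).castSucc r`
is `r` with its next-to-last entry deleted. -/
structure IsEliminationTable [Preorder ι] (ζ : ι → K) (w : ι → ℤ → K)
    (W : (n : ℕ) → (Fin n → ι) → ℤ → K) : Prop where
  one : ∀ (r : Fin 1 → ι) (m : ℤ), W 1 r m = w (r 0) m
  ne_zero : ∀ (n : ℕ) (r : Fin (n + 2) → ι), StrictMono r → ∀ m : ℤ, W (n + 1) (Fin.init r) m ≠ 0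
  succ : ∀ (n : ℕ) (r : Fin (n + 2) → ι), StrictMono r → ∀ m : ℤ,
    W (n + 2) r (m + 1) =
      (W (n + 1) (Fin.init r) m * W (n + 1) (Fin.removeNth (Fin.last n).castSucc r) (m + 1) *
          ζ (r (Fin.last (n + 1))) -
        W (n + 1) (Fin.init r) (m + 1) * W (n + 1) (Fin.removeNth (Fin.last n).castSucc r) m *
          ζ (r (Fin.last n).castSucc)) /
        W (n + 1) (Fin.init r) m

namespace IsEliminationTable

variable [Preorder ι] {ζ : ι → K} {w : ι → ℤ → K} {W : (n : ℕ) → (Fin n → ι) → ℤ → K}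

theorem cons (hW : IsEliminationTable ζ w W) (a : ι) :
    IsEliminationTable (fun x : {x // a < x} => ζ x) (fun x m => W 2 ![a, x] m)
      (fun n r m => W (n + 1) (Fin.cons a fun i => (r i : ι)) m) := by
  have hmono : ∀ {n} (r : Fin n → {x // a < x}), StrictMono r →
      StrictMono (Fin.cons a fun i => (r i : ι) : Fin (n + 1) → ι) := fun r hr =>
    Fin.strictMono_cons.2 ⟨fun j => (r j).2, (Subtype.strictMono_coe _).comp hr⟩
  refine ⟨fun r m => ?_, fun n r hr m => ?_, fun n r hr m => ?_⟩
  · congr 1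
    funext i
    fin_cases i <;> rfl
  · have h := hW.ne_zero (n + 1) _ (hmono r hr) m
    rwa [Fin.init_cons] at h
  · have h := hW.succ (n + 1) _ (hmono r hr) m
    rw [Fin.init_cons, show (Fin.last (n + 1)).castSucc = (Fin.last n).castSucc.succ from rfl,
      Fin.removeNth_succ_cons, show Fin.last (n + 1 + 1) = (Fin.last (n + 1)).succ from rfl,
      Fin.cons_succ, Fin.cons_succ] at h
    exact h

theorem det_genVandermonde (hW : IsEliminationTable ζ w W) (k : ℤ) {n : ℕ} (r : Fin n → ι)
    (hr : StrictMono r) :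
    (genVandermonde ζ w k r).det =
      ∏ j : Fin n, W (j + 1) (Fin.take (j + 1) j.isLt r) (k + (j : ℕ)) := by
  induction n generalizing ι k with
  | zero => simp
  | succ n ih =>
    have hpair : ∀ l : Fin n, StrictMono ![r 0, r l.succ] := fun l =>
      strictMono_vecCons.2 ⟨hr (Fin.succ_pos l), strictMono_vecEmpty⟩
    have h0 : ∀ i : Fin n, w (r 0) (k + (i : ℕ)) ≠ 0 := fun i => by
      simpa [hW.one, Fin.init] using hW.ne_zero 0 _ (hpair i) (k + (i : ℕ))
    have hw : ∀ (l : Fin n) (m : ℤ), W 2 ![r 0, r l.succ] (m + 1) =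
        (w (r 0) m * w (r l.succ) (m + 1) * ζ (r l.succ) -
          w (r 0) (m + 1) * w (r l.succ) m * ζ (r 0)) / w (r 0) m := fun l m => by
      simpa [hW.one, Fin.init] using hW.succ 0 _ (hpair l) m
    let t : Fin n → {x // r 0 < x} := fun l => ⟨r l.succ, hr (Fin.succ_pos l)⟩
    have ht : StrictMono t := fun a b h => hr (Fin.succ_lt_succ_iff.2 h)
    rw [det_genVandermonde_eq_mul_det_tail ζ w (fun x m => W 2 ![r 0, x] m) k r h0 hw,
      Fin.prod_univ_succ]
    change w (r 0) k * (genVandermonde (fun x : {x // r 0 < x} => ζ x)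
      (fun x m => W 2 ![r 0, (x : ι)] m) (k + 1) t).det = _
    rw [ih (hW.cons (r 0)) (k + 1) t ht]
    congr 1
    · simp [hW.one]
    refine Finset.prod_congr rfl fun j _ => ?_
    have htake : (Fin.cons (r 0) fun i => (Fin.take (j + 1) j.isLt t i : ι)) =
        Fin.take (j + 2) (by omega) r := by
      funext i
      cases i using Fin.cases <;> rfl
    rw [htake]
    change _ = W (j + 2) (Fin.take (j + 2) _ r) (k + ((j + 1 : ℕ) : ℤ))
    congr 1
    push_cast
    ring

end IsEliminationTable

/-- Gauss-elimination factorization of the generalized Vandermonde-type determinants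
(equations (vtow) and (w-def) of the paper): for strictly increasing tuples,
`det( w_{r_l}^{(k+i)} ζ_{r_l}^i ) = w_{r_0}^{(k)} w_{r_0,r_1}^{(k+1)} ⋯ w_{r_0,…,r_{n-1}}^{(k+n-1)}`,
where the multi-index quantities `W` are defined by the stated recursion. -/
theorem stmt_14
    (N : ℕ) (ζ : Fin N → ℂ)
    (w : Fin N → ℤ → ℂ)
    (W : (n : ℕ) → (Fin n → Fin N) → ℤ → ℂ)
    (hW1 : ∀ (r : Fin 1 → Fin N) (m : ℤ), W 1 r m = w (r 0) m)
    (hWden : ∀ (n : ℕ) (r : Fin (n + 2) → Fin N), StrictMono r → ∀ m : ℤ,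
      W (n + 1) (fun i => r i.castSucc) m ≠ 0)
    (hWrec : ∀ (n : ℕ) (r : Fin (n + 2) → Fin N), StrictMono r → ∀ m : ℤ,
      W (n + 2) r (m + 1) =
        (W (n + 1) (fun i => r i.castSucc) m *
            W (n + 1) (fun i => if i = Fin.last n then r (Fin.last (n + 1)) else r i.castSucc)
              (m + 1) *
            ζ (r (Fin.last (n + 1))) -
          W (n + 1) (fun i => r i.castSucc) (m + 1) *
            W (n + 1) (fun i => if i = Fin.last n then r (Fin.last (n + 1)) else r i.castSucc)
              m *
            ζ (r ((Fin.last n).castSucc))) /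
          W (n + 1) (fun i => r i.castSucc) m) :
    ∀ (k : ℤ) (n : ℕ) (r : Fin n → Fin N), StrictMono r →
      Matrix.det (Matrix.of fun i l : Fin n => w (r l) (k + (i : ℕ)) * ζ (r l) ^ (i : ℕ))
        = ∏ j : Fin n,
            W ((j : ℕ) + 1) (fun i : Fin ((j : ℕ) + 1) => r (Fin.castLE (by omega) i))
              (k + (j : ℕ)) := by
  have hW : IsEliminationTable ζ w W :=
    { one := hW1
      ne_zero := hWden
      succ := fun n r hr m => by
        rw [Fin.removeNth_castSucc_last]
        exact hWrec n r hr m }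
  intro k n r hr
  exact hW.det_genVandermonde k r hr
end

section
/- Let N ≥ 1, M ≥ 1, and for each (k, t) ∈ ℤ × ℤ let L^{(k,t)}, R^{(k,t)}, L̃^{(k,t)} be N×N complex matrices satisfying, for all k and t, the compatibility relations L̃^{(k+1,t)} R^{(k,t+1)} = R^{(k,t)} L̃^{(k,t)} and L̃^{(k,t)} L^{(k,t+1)} = L^{(k,t)} L̃^{(k+M,t)}. Define H^{(k,t)} := L^{(k,t)} · R^{(k+M−1,t)} · R^{(k+M−2,t)} ⋯ R^{(k,t)}. Then L̃^{(k,t)} H^{(k,t+1)} = H^{(k,t)} L̃^{(k,t)} for all k, t; in particular, if L̃^{(k,t)} is invertible then H^{(k,t+1)} = (L̃^{(k,t)})^{−1} H^{(k,t)} L̃^{(k,t)}, so H^{(k,t+1)} and H^{(k,t)} are similar. -/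
/-!
Write `Q^{(k,t)} = R^{(k+M-1,t)} ⋯ R^{(k,t)}`, so `H^{(k,t)} = L^{(k,t)} Q^{(k,t)}`. Iterating the first
relation along the factors of `Q` pushes `L̃^{(k+M,t)}` through `Q^{(k,t+1)}` to become `L̃^{(k,t)}`;
the second relation turns `L̃^{(k,t)} L^{(k,t+1)}` into `L^{(k,t)} L̃^{(k+M,t)}`, which together give
`L̃^{(k,t)} H^{(k,t+1)} = H^{(k,t)} L̃^{(k,t)}`.
-/

section DescProd

variable {α : Type*} [Monoid α]

/-- `descProd R k m = R (k + m - 1) * ⋯ * R (k + 1) * R k`. -/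
def descProd (R : ℤ → α) (k : ℤ) (m : ℕ) : α :=
  ((List.range m).map fun j => R (k + ((m - 1 - j : ℕ) : ℤ))).prod

theorem descProd_succ (R : ℤ → α) (k : ℤ) (m : ℕ) :
    descProd R k (m + 1) = descProd R (k + 1) m * R k := by
  simp only [descProd, List.range_succ, List.map_append, List.prod_append, List.map_cons,
    List.map_nil, List.prod_cons, List.prod_nil, mul_one, Nat.add_sub_cancel, Nat.sub_self,
    Nat.cast_zero, add_zero]
  congr 2
  refine List.map_congr_left fun j hj => congrArg R ?_
  have := List.mem_range.mp hj
  omega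

theorem descProd_intertwine {A B C : ℤ → α} (h : ∀ k, A (k + 1) * B k = C k * A k)
    (k : ℤ) (m : ℕ) : A (k + m) * descProd B k m = descProd C k m * A k := by
  induction m generalizing k with
  | zero => simp [descProd]
  | succ m ih =>
    calc A (k + (m + 1 : ℕ)) * descProd B k (m + 1)
        = (A (k + 1 + m) * descProd B (k + 1) m) * B k := by
          rw [descProd_succ, ← mul_assoc, Nat.cast_succ, ← add_assoc, add_right_comm]
      _ = descProd C (k + 1) m * (A (k + 1) * B k) := by rw [ih, mul_assoc]
      _ = descProd C k (m + 1) * A k := by rw [h, ← mul_assoc, descProd_succ]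

end DescProd

theorem stmt_16_general
    (N M : ℕ)
    (L R Lt : ℤ → ℤ → Matrix (Fin N) (Fin N) ℂ)
    (hc1 : ∀ k t : ℤ, Lt (k + 1) t * R k (t + 1) = R k t * Lt k t)
    (hc2 : ∀ k t : ℤ, Lt k t * L k (t + 1) = L k t * Lt (k + M) t)
    (H : ℤ → ℤ → Matrix (Fin N) (Fin N) ℂ)
    (hH : ∀ k t : ℤ, H k t = L k t *
      (((List.range M).map fun j => R (k + ((M - 1 - j : ℕ) : ℤ)) t).prod)) :
    ∀ k t : ℤ,
      Lt k t * H k (t + 1) = H k t * Lt k t ∧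
      (IsUnit (Lt k t) → H k (t + 1) = (Lt k t)⁻¹ * (H k t * Lt k t)) := by
  intro k t
  have hHQ : ∀ s, H k s = L k s * descProd (fun i => R i s) k M := hH k
  have hLax : Lt k t * H k (t + 1) = H k t * Lt k t := by
    have hQ := descProd_intertwine (A := (Lt · t)) (B := (R · (t + 1))) (C := (R · t))
      (hc1 · t) k M
    rw [hHQ, hHQ, ← mul_assoc, hc2, mul_assoc, hQ, mul_assoc]
  refine ⟨hLax, fun hU => ?_⟩
  rw [← hLax, Matrix.nonsing_inv_mul_cancel_left _ _ ((Matrix.isUnit_iff_isUnit_det _).mp hU)]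

/-- The compatibility (Lax) relations of the finite nonautonomous discrete hungry Toda
lattice imply `L̃^{(k,t)} H^{(k,t+1)} = H^{(k,t)} L̃^{(k,t)}` for the Hessenberg-type
matrices `H^{(k,t)} = L^{(k,t)} R^{(k+M-1,t)} ⋯ R^{(k,t)}`; in particular the `H`'s at
consecutive times are similar whenever `L̃^{(k,t)}` is invertible. -/
theorem stmt_16
    (N M : ℕ) (hM : 1 ≤ M)
    (L R Lt : ℤ → ℤ → Matrix (Fin N) (Fin N) ℂ)
    (hc1 : ∀ k t : ℤ, Lt (k + 1) t * R k (t + 1) = R k t * Lt k t)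
    (hc2 : ∀ k t : ℤ, Lt k t * L k (t + 1) = L k t * Lt (k + M) t)
    (H : ℤ → ℤ → Matrix (Fin N) (Fin N) ℂ)
    (hH : ∀ k t : ℤ, H k t = L k t *
      (((List.range M).map fun j => R (k + ((M - 1 - j : ℕ) : ℤ)) t).prod)) :
    ∀ k t : ℤ,
      Lt k t * H k (t + 1) = H k t * Lt k t ∧
      (IsUnit (Lt k t) → H k (t + 1) = (Lt k t)⁻¹ * (H k t * Lt k t)) :=
  stmt_16_general N M L R Lt hc1 hc2 H hH
end

section
/- Let M ≥ 1, N ≥ 2, let ζ_0, …, ζ_{N−1} be real with 0 < ζ_0 < … < ζ_{N−1}, set z_r := ζ_r^M, let w_r^{(m)} > 0 (0 ≤ r ≤ N−1, m ∈ ℤ) satisfy w_r^{(m+M)} = w_r^{(m)}, suppose every determinant V^{(k)}_{r_0,…,r_{n−1}} := det( w_{r_l}^{(k+i)} ζ_{r_l}^i )_{i,l=0}^{n-1} is positive for all k ∈ ℤ and all strictly increasing tuples, and let a ≤ s^{(t)} ≤ b for all t ≥ 0 with b < z_0. Define μ^{(t)}_m := Σ_r w_r^{(m)} ζ_r^m Π_{τ=0}^{t−1}(z_r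 − s^{(τ)}), τ^{(k,t)}_n := det(μ^{(t)}_{k+i+Mj})_{i,j=0}^{n-1}, q^{(k,t)}_n := (τ^{(k,t)}_n τ^{(k+1,t)}_{n+1})/(τ^{(k,t)}_{n+1} τ^{(k+1,t)}_n) and e^{(k,t)}_n := (τ^{(k,t)}_{n+2} τ^{(k+M,t)}_n)/(τ^{(k,t)}_{n+1} τ^{(k+M,t)}_{n+1}). Then, as t → ∞: (i) q^{(k,t)}_n → (V^{(k)}_{N−n,…,N−1} · V^{(k+1)}_{N−n−1,…,N−1}) / (V^{(k)}_{N−n−1,…,N−1} · V^{(k+1)}_{N−n,…,N−1}) · ζ_{N−n−1} for 0 ≤ n ≤ N−1; (ii) Π_{j=0}^{M−1} q^{(k+j,t)}_n → z_{N−n−1}; and (iii) e^{(k,t)}_n → 0 for 0 ≤ n ≤ N−2. -/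
/-!
With `z_r = ζ_r ^ M` and `P_t(z) = ∏_{τ < t} (z - s^{(τ)})`, the `M`-periodicity of `w` gives
`μ^{(t)}_{k+i+Mj} = ∑_r w_r^{(k+i)} ζ_r^{k+i} z_r^j P_t(z_r)`, so `τ^{(k,t)}_n` is the determinant
of a product `A · diag(P_t(z_r)) · Z` of an `n × N`, an `N × N` and an `N × n` matrix. Expanding
it multilinearly in the columns writes it as a sum over column maps `g : Fin n → Fin N` of
`∏_j P_t(z_{g j})` times a constant. Since `a ≤ s^{(τ)} ≤ b < z_0 < ⋯ < z_{N-1}`, the ratio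
`P_t(x) / P_t(y)` for `x < y` decays like `((x - a) / (y - a))^t`, so only the maps onto the `n`
largest nodes survive after dividing by their weight: `τ^{(k,t)}_n` is asymptotic to
`(∏ ζ)^k · V^{(k)}_{N-n,…,N-1} · Vandermonde(z_{N-n},…,z_{N-1})` times that weight. In `q` the
weights cancel, which gives (i); in `e` they leave `P_t(z_{N-n-2}) / P_t(z_{N-n-1}) → 0`, which
gives (iii); and (ii) is (i) multiplied over a period, where the `V`-ratios telescope because
`V^{(k+M)} = V^{(k)}`.
-/

open Filter Finset Matrix Topology

theorem Matrix.det_mul_eq_sum_prod_mul_det_submatrix {R m l : Type*} [CommRing R] [Fintype m]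
    [Fintype l] [DecidableEq l] (A : Matrix l m R) (B : Matrix m l R) :
    (A * B).det = ∑ g : l → m, (∏ j, B (g j) j) * (A.submatrix id g).det := by
  have hrows : (A * B)ᵀ = fun j => ∑ r, B r j • Aᵀ r := by
    ext j i
    simp [mul_apply, mul_comm]
  calc (A * B).det = detRowAlternating (fun j => ∑ r, B r j • Aᵀ r) := by
        rw [← det_transpose, hrows]; rfl
    _ = ∑ g : l → m, detRowAlternating (fun j => B (g j) j • Aᵀ (g j)) :=
        detRowAlternating.toMultilinearMap.map_sum fun j r => B r j • Aᵀ r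
    _ = ∑ g : l → m, (∏ j, B (g j) j) * (A.submatrix id g).det := by
        refine sum_congr rfl fun g _ => ?_
        rw [AlternatingMap.map_smul_univ, smul_eq_mul, ← det_transpose]
        rfl

lemma det_vandermonde_pos {n : ℕ} {v : Fin n → ℝ} (hv : StrictMono v) :
    0 < (vandermonde v).det := by
  rw [det_vandermonde]
  exact prod_pos fun i _ => prod_pos fun j hj => sub_pos.2 (hv (mem_Ioi.1 hj))

lemma prod_range_div_succ_eq_one_of_eq {G : Type*} [CommGroupWithZero G] {F : ℕ → G} {m : ℕ}
    (hF : ∀ j, F j ≠ 0) (hm : F m = F 0) : ∏ j ∈ range m, F j / F (j + 1) = 1 := by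
  have hshift : ∏ j ∈ range m, F (j + 1) = ∏ j ∈ range m, F j :=
    mul_right_cancel₀ (hF 0) (by rw [← prod_range_succ', prod_range_succ, hm])
  rw [prod_div_distrib, hshift, div_self (prod_ne_zero_iff.2 fun j _ => hF j)]

lemma tendsto_mul_div_mul_of_tendsto_div {α : Type*} {l : Filter α}
    {f₁ f₂ f₃ f₄ d₁ d₂ d₃ d₄ : α → ℝ} {c₁ c₂ c₃ c₄ ρ : ℝ}
    (h₁ : Tendsto (fun t => f₁ t / d₁ t) l (𝓝 c₁)) (h₂ : Tendsto (fun t => f₂ t / d₂ t) l (𝓝 c₂))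
    (h₃ : Tendsto (fun t => f₃ t / d₃ t) l (𝓝 c₃)) (h₄ : Tendsto (fun t => f₄ t / d₄ t) l (𝓝 c₄))
    (hc : c₃ * c₄ ≠ 0) (hd₁₂ : ∀ t, d₁ t * d₂ t ≠ 0) (hd₃₄ : ∀ t, d₃ t * d₄ t ≠ 0)
    (hρ : Tendsto (fun t => d₁ t * d₂ t / (d₃ t * d₄ t)) l (𝓝 ρ)) :
    Tendsto (fun t => f₁ t * f₂ t / (f₃ t * f₄ t)) l (𝓝 (c₁ * c₂ / (c₃ * c₄) * ρ)) := by
  refine (((h₁.mul h₂).div (h₃.mul h₄) hc).mul hρ).congr fun t => ?_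
  calc _ = f₁ t * f₂ t / (f₃ t * f₄ t) * ((d₁ t * d₂ t) / (d₁ t * d₂ t)) *
        ((d₃ t * d₄ t) / (d₃ t * d₄ t)) := by
          simp only [Pi.div_apply, div_eq_mul_inv, mul_inv, inv_inv]
          ring
    _ = f₁ t * f₂ t / (f₃ t * f₄ t) := by
          rw [div_self (hd₁₂ t), div_self (hd₃₄ t), mul_one, mul_one]

section ShiftProd

variable {a b : ℝ} {s : ℕ → ℝ}

noncomputable def shiftProd (s : ℕ → ℝ) (t : ℕ) (x : ℝ) : ℝ :=
  ∏ τ ∈ range t, (x - s τ)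

lemma shiftProd_pos (hsb : ∀ t, s t ≤ b) {x : ℝ} (hx : b < x) (t : ℕ) :
    0 < shiftProd s t x :=
  prod_pos fun τ _ => by linarith [hsb τ]

lemma shiftProd_le_shiftProd (hsb : ∀ t, s t ≤ b) {x y : ℝ} (hx : b < x) (hxy : x ≤ y)
    (t : ℕ) : shiftProd s t x ≤ shiftProd s t y :=
  prod_le_prod (fun τ _ => by linarith [hsb τ]) fun τ _ => by linarith

lemma shiftProd_le_pow_mul_shiftProd (hsa : ∀ t, a ≤ s t) (hsb : ∀ t, s t ≤ b) {x y : ℝ}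
    (hx : b < x) (hxy : x ≤ y) (t : ℕ) :
    shiftProd s t x ≤ ((x - a) / (y - a)) ^ t * shiftProd s t y := by
  have hya : 0 < y - a := by linarith [hsa 0, hsb 0]
  calc shiftProd s t x ≤ ∏ τ ∈ range t, ((x - a) / (y - a) * (y - s τ)) := by
        refine prod_le_prod (fun τ _ => by linarith [hsb τ]) fun τ _ => ?_
        rw [div_mul_eq_mul_div, le_div_iff₀ hya]
        nlinarith [mul_nonneg (sub_nonneg.2 hxy) (sub_nonneg.2 (hsa τ))]
    _ = ((x - a) / (y - a)) ^ t * shiftProd s t y := by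
        rw [prod_mul_distrib, prod_const, card_range, shiftProd]

lemma tendsto_shiftProd_div_shiftProd (hsa : ∀ t, a ≤ s t) (hsb : ∀ t, s t ≤ b) {x y : ℝ}
    (hx : b < x) (hxy : x < y) :
    Tendsto (fun t => shiftProd s t x / shiftProd s t y) atTop (𝓝 0) := by
  have hab := (hsa 0).trans (hsb 0)
  have hy := shiftProd_pos hsb (hx.trans hxy)
  refine squeeze_zero (fun t => div_nonneg (shiftProd_pos hsb hx t).le (hy t).le)
    (fun t => (div_le_iff₀ (hy t)).2 (shiftProd_le_pow_mul_shiftProd hsa hsb hx hxy.le t))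
    (tendsto_pow_atTop_nhds_zero_of_lt_one (div_nonneg (by linarith) (by linarith)) ?_)
  rw [div_lt_one (by linarith)]
  linarith

lemma tendsto_prod_shiftProd_div_prod {ι : Type*} [Fintype ι] (hsa : ∀ t, a ≤ s t)
    (hsb : ∀ t, s t ≤ b) {x y : ι → ℝ} (hx : ∀ i, b < x i) (hxy : ∀ i, x i ≤ y i) {i₀ : ι}
    (hi₀ : x i₀ < y i₀) :
    Tendsto (fun t => (∏ i, shiftProd s t (x i)) / ∏ i, shiftProd s t (y i)) atTop (𝓝 0) := by
  classical
  have hy : ∀ i t, 0 < shiftProd s t (y i) := fun i => shiftProd_pos hsb ((hx i).trans_le (hxy i))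
  have hratio : ∀ i t, 0 ≤ shiftProd s t (x i) / shiftProd s t (y i) :=
    fun i t => div_nonneg (shiftProd_pos hsb (hx i) t).le (hy i t).le
  refine squeeze_zero (fun t => ?_) (fun t => ?_)
    (tendsto_shiftProd_div_shiftProd hsa hsb (hx i₀) hi₀)
  · rw [← prod_div_distrib]
    exact prod_nonneg fun i _ => hratio i t
  · rw [← prod_div_distrib, ← mul_prod_erase _ _ (mem_univ i₀)]
    exact mul_le_of_le_one_right (hratio i₀ t) (prod_le_one (fun i _ => hratio i t)
      fun i _ => div_le_one_of_le₀ (shiftProd_le_shiftProd hsb (hx i) (hxy i) t) (hy i t).le)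

end ShiftProd

section TopIndices

variable {N n : ℕ}

def topIndices (hn : n ≤ N) (j : Fin n) : Fin N :=
  ⟨N - n + j, by omega⟩

lemma topIndices_strictMono (hn : n ≤ N) : StrictMono (topIndices hn) := fun i j hij => by
  simp only [topIndices, Fin.mk_lt_mk]
  omega

lemma StrictMono.le_topIndices {g : Fin n → Fin N} (hg : StrictMono g) (hn : n ≤ N)
    (j : Fin n) : g j ≤ topIndices hn j := by
  -- `g` maps the `n - j` indices `≥ j` injectively to indices `≥ g j`, of which there are `N - g j`
  have h := card_le_card_of_injOn g (s := Ici j) (t := Ici (g j))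
    (fun i hi => by simpa using hg.monotone (by simpa using hi)) hg.injective.injOn
  simp only [Fin.card_Ici] at h
  simp only [topIndices, Fin.le_def]
  omega

lemma prod_topIndices_succ {α : Type*} [CommMonoid α] (f : Fin N → α) (hn : n + 1 ≤ N) :
    ∏ j, f (topIndices hn j) =
      f ⟨N - n - 1, by omega⟩ * ∏ j, f (topIndices (n := n) (by omega) j) := by
  rw [Fin.prod_univ_succ]
  congr 1
  exact prod_congr rfl fun j _ =>
    congrArg f (Fin.ext (by simp only [topIndices, Fin.val_succ]; omega))

end TopIndices

section Dominant

variable {a b : ℝ} {s : ℕ → ℝ} {N n : ℕ}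

lemma tendsto_prod_shiftProd_div_prod_topIndices (hsa : ∀ t, a ≤ s t) (hsb : ∀ t, s t ≤ b)
    {x : Fin N → ℝ} (hx : StrictMono x) (hbx : ∀ r, b < x r) (hn : n ≤ N)
    {g : Fin n → Fin N} (hg : Function.Injective g) (hgtop : ∀ f, topIndices hn ∘ f ≠ g) :
    Tendsto (fun t => (∏ j, shiftProd s t (x (g j))) / ∏ j, shiftProd s t (x (topIndices hn j)))
      atTop (𝓝 0) := by
  -- after sorting, `g` lies entrywise below `topIndices hn`, strictly so somewhere
  set σ := Tuple.sort g
  have hσ : StrictMono (g ∘ σ) :=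
    (Tuple.monotone_sort g).strictMono_of_injective (hg.comp σ.injective)
  obtain ⟨j₀, hj₀⟩ : ∃ j₀, g (σ j₀) ≠ topIndices hn j₀ := by
    by_contra! h
    exact hgtop σ.symm (funext fun j => by simpa using (h (σ.symm j)).symm)
  refine (tendsto_prod_shiftProd_div_prod hsa hsb (fun j => hbx (g (σ j)))
    (fun j => hx.monotone (hσ.le_topIndices hn j))
    (hx ((hσ.le_topIndices hn j₀).lt_of_ne hj₀))).congr fun t => ?_
  rw [Equiv.prod_comp σ fun j => shiftProd s t (x (g j))]

lemma tendsto_mul_prod_shiftProd_div_prod_topIndices (hsa : ∀ t, a ≤ s t)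
    (hsb : ∀ t, s t ≤ b) {x : Fin N → ℝ} (hx : StrictMono x) (hbx : ∀ r, b < x r) (hn : n ≤ N)
    (K : (Fin n → Fin N) → ℝ) (hK : ∀ g, ¬ Function.Injective g → K g = 0) (g : Fin n → Fin N) :
    Tendsto (fun t => K g *
        ((∏ j, shiftProd s t (x (g j))) / ∏ j, shiftProd s t (x (topIndices hn j))))
      atTop (𝓝 (if g ∈ univ.image (topIndices hn ∘ ·) then K g else 0)) := by
  by_cases hg : Function.Injective g
  swap
  · simp [hK g hg]
  split_ifs with hmem
  · obtain ⟨f, -, rfl⟩ := mem_image.1 hmem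
    have hf : Function.Bijective f := (Function.Injective.of_comp hg).bijective_of_finite
    refine tendsto_const_nhds.congr fun t => ?_
    simp only [Function.comp_apply]
    rw [hf.prod_comp fun j => shiftProd s t (x (topIndices hn j)),
      div_self (prod_pos fun _ _ => shiftProd_pos hsb (hbx _) t).ne', mul_one]
  · simpa using (tendsto_prod_shiftProd_div_prod_topIndices hsa hsb hx hbx hn hg
      fun f hf => hmem (mem_image.2 ⟨f, mem_univ _, hf⟩)).const_mul (K g)

theorem tendsto_det_mul_diagonal_shiftProd_mul_div (hsa : ∀ t, a ≤ s t)
    (hsb : ∀ t, s t ≤ b) {x : Fin N → ℝ} (hx : StrictMono x) (hbx : ∀ r, b < x r) (hn : n ≤ N)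
    (A : Matrix (Fin n) (Fin N) ℝ) (B : Matrix (Fin N) (Fin n) ℝ) :
    Tendsto (fun t => (A * (diagonal (fun r => shiftProd s t (x r)) * B)).det /
        ∏ j, shiftProd s t (x (topIndices hn j)))
      atTop (𝓝 ((A.submatrix id (topIndices hn)).det * (B.submatrix (topIndices hn) id).det)) := by
  set K : (Fin n → Fin N) → ℝ := fun g => (∏ j, B (g j) j) * (A.submatrix id g).det
  have hK : ∀ g, ¬ Function.Injective g → K g = 0 := fun g hg => by
    obtain ⟨i, j, hij, hne⟩ := Function.not_injective_iff.1 hg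
    simp only [K, det_zero_of_column_eq (M := A.submatrix id g) hne fun _ => by simp [hij],
      mul_zero]
  -- the surviving maps `topIndices hn ∘ f` make up the expansion of the `n × n` product
  have hlim : (A.submatrix id (topIndices hn)).det * (B.submatrix (topIndices hn) id).det =
      ∑ g, if g ∈ univ.image (topIndices hn ∘ ·) then K g else 0 := by
    rw [← det_mul, det_mul_eq_sum_prod_mul_det_submatrix, sum_ite_mem, univ_inter,
      sum_image fun f _ f' _ h => (topIndices_strictMono hn).injective.comp_left h]
    rfl
  rw [hlim]
  refine (tendsto_finsetSum _ fun g _ =>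
    tendsto_mul_prod_shiftProd_div_prod_topIndices hsa hsb hx hbx hn K hK g).congr fun t => ?_
  rw [det_mul_eq_sum_prod_mul_det_submatrix, sum_div]
  refine sum_congr rfl fun g _ => ?_
  simp only [diagonal_mul, prod_mul_distrib, K]
  ring

end Dominant

section Toda

variable {M N : ℕ} {ζ : Fin N → ℝ} {w : Fin N → ℤ → ℝ} {V : ℤ → (n : ℕ) → (Fin n → Fin N) → ℝ}
  {a b : ℝ} {s : ℕ → ℝ} {μ : ℕ → ℕ → ℝ} {τ : ℕ → ℕ → ℕ → ℝ}

lemma tau_eq_det_mul_diagonal_mul (hwper : ∀ r m, w r (m + M) = w r m)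
    (hμ : ∀ t m : ℕ, μ t m = ∑ r, w r m * ζ r ^ m * shiftProd s t (ζ r ^ M))
    (hτ : ∀ k t n : ℕ, τ k t n = (of fun i j : Fin n => μ t (k + i + M * j)).det) (k t n : ℕ) :
    τ k t n = (of (fun (i : Fin n) r => w r (k + (i : ℕ)) * ζ r ^ (k + (i : ℕ))) *
      (diagonal (fun r => shiftProd s t (ζ r ^ M)) *
        of fun r (j : Fin n) => (ζ r ^ M) ^ (j : ℕ))).det := by
  rw [hτ]
  congr 1
  ext i j
  rw [mul_apply, of_apply, hμ]
  refine sum_congr rfl fun r _ => ?_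
  rw [show ((k + i + M * j : ℕ) : ℤ) = (k + (i : ℕ) : ℤ) + (j : ℕ) * M by push_cast; ring,
    Function.Periodic.nat_mul (hwper r) j, diagonal_mul, of_apply, of_apply, pow_add, pow_mul]
  ring

noncomputable def tauLimit (ζ : Fin N → ℝ) (M : ℕ) (V : ℤ → (n : ℕ) → (Fin n → Fin N) → ℝ)
    (k : ℕ) {n : ℕ} (hn : n ≤ N) : ℝ :=
  (∏ j, ζ (topIndices hn j)) ^ k * V k n (topIndices hn) *
    (vandermonde fun j => ζ (topIndices hn j) ^ M).det

theorem tendsto_tau_div_prod_shiftProd (hz : StrictMono fun r => ζ r ^ M)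
    (hbz : ∀ r, b < ζ r ^ M) (hwper : ∀ r m, w r (m + M) = w r m)
    (hV : ∀ k n r, V k n r = (of fun i l : Fin n => w (r l) (k + (i : ℕ)) * ζ (r l) ^ (i : ℕ)).det)
    (hsa : ∀ t, a ≤ s t) (hsb : ∀ t, s t ≤ b)
    (hμ : ∀ t m : ℕ, μ t m = ∑ r, w r m * ζ r ^ m * shiftProd s t (ζ r ^ M))
    (hτ : ∀ k t n : ℕ, τ k t n = (of fun i j : Fin n => μ t (k + i + M * j)).det)
    (k : ℕ) {n : ℕ} (hn : n ≤ N) :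
    Tendsto (fun t => τ k t n / ∏ j, shiftProd s t (ζ (topIndices hn j) ^ M)) atTop
      (𝓝 (tauLimit ζ M V k hn)) := by
  convert tendsto_det_mul_diagonal_shiftProd_mul_div hsa hsb hz hbz hn _ _ using 3 with t
  · exact tau_eq_det_mul_diagonal_mul hwper hμ hτ k t n
  · rw [tauLimit, hV, ← prod_pow, ← det_mul_row]
    congr 3
    ext i l
    simp only [of_apply, id, pow_add]
    ring

lemma tauLimit_pos (hζpos : ∀ r, 0 < ζ r) (hz : StrictMono fun r => ζ r ^ M)
    (hVpos : ∀ k n r, StrictMono r → 0 < V k n r) (k : ℕ) {n : ℕ} (hn : n ≤ N) :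
    0 < tauLimit ζ M V k hn :=
  mul_pos (mul_pos (pow_pos (prod_pos fun _ _ => hζpos _) k)
    (hVpos _ _ _ (topIndices_strictMono hn)))
    (det_vandermonde_pos (hz.comp (topIndices_strictMono hn)))

lemma tauLimit_mul_div_mul (hζpos : ∀ r, 0 < ζ r) (hz : StrictMono fun r => ζ r ^ M) (k : ℕ)
    {n : ℕ} (hn : n < N) :
    tauLimit ζ M V k hn.le * tauLimit ζ M V (k + 1) (n := n + 1) hn /
        (tauLimit ζ M V k (n := n + 1) hn * tauLimit ζ M V (k + 1) hn.le) =
      V k n (topIndices hn.le) * V (k + 1) (n + 1) (topIndices (n := n + 1) hn) /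
        (V k (n + 1) (topIndices (n := n + 1) hn) * V (k + 1) n (topIndices hn.le)) *
        ζ ⟨N - n - 1, by omega⟩ := by
  have hW : ∀ m (hm : m ≤ N), (vandermonde fun j => ζ (topIndices hm j) ^ M).det ≠ 0 :=
    fun m hm => (det_vandermonde_pos (hz.comp (topIndices_strictMono hm))).ne'
  have hP : ∏ j, ζ (topIndices hn.le j) ≠ 0 := (prod_pos fun _ _ => hζpos _).ne'
  have hy := (hζpos ⟨N - n - 1, by omega⟩).ne'
  have hWn := hW n hn.le
  have hWn' := hW (n + 1) hn
  simp only [tauLimit, prod_topIndices_succ ζ (n := n) hn, Nat.cast_add, Nat.cast_one]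
  field_simp
  ring

lemma prod_range_V_ratio_mul_eq_pow (hwper : ∀ r m, w r (m + M) = w r m)
    (hV : ∀ k n r, V k n r = (of fun i l : Fin n => w (r l) (k + (i : ℕ)) * ζ (r l) ^ (i : ℕ)).det)
    (hVpos : ∀ k n r, StrictMono r → 0 < V k n r) (k : ℕ) {n : ℕ} (hn : n < N) (y : ℝ) :
    ∏ j ∈ range M, (V (k + j : ℕ) n (topIndices hn.le) *
        V ((k + j : ℕ) + 1) (n + 1) (topIndices (n := n + 1) hn) /
        (V (k + j : ℕ) (n + 1) (topIndices (n := n + 1) hn) *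
          V ((k + j : ℕ) + 1) n (topIndices hn.le)) * y) = y ^ M := by
  set F : ℕ → ℝ := fun j =>
    V (k + j : ℕ) n (topIndices hn.le) / V (k + j : ℕ) (n + 1) (topIndices (n := n + 1) hn)
  have hF : ∀ j, F j ≠ 0 := fun j =>
    div_ne_zero (hVpos _ _ _ (topIndices_strictMono _)).ne'
      (hVpos _ _ _ (topIndices_strictMono _)).ne'
  have hFM : F M = F 0 := by
    have hVper : ∀ m n r, V (m + M) n r = V m n r := fun m n r => by
      simp only [hV, add_right_comm _ (M : ℤ), hwper]
    simp only [F, Nat.cast_add, Nat.cast_zero, add_zero, hVper]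
  calc _ = ∏ j ∈ range M, (F j / F (j + 1) * y) := prod_congr rfl fun j _ => by
        simp only [F, show ((k + (j + 1) : ℕ) : ℤ) = (k + j : ℕ) + 1 by push_cast; ring,
          div_eq_mul_inv, mul_inv, inv_inv]
        ring
    _ = y ^ M := by
      rw [prod_mul_distrib, prod_range_div_succ_eq_one_of_eq hF hFM, prod_const, card_range,
        one_mul]

lemma tendsto_prod_shiftProd_topIndices_mul_div (hsa : ∀ t, a ≤ s t) (hsb : ∀ t, s t ≤ b)
    {x : Fin N → ℝ} (hx : StrictMono x) (hbx : ∀ r, b < x r) {n : ℕ} (hn : n + 2 ≤ N) :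
    Tendsto (fun t => (∏ j, shiftProd s t (x (topIndices hn j))) *
        (∏ j, shiftProd s t (x (topIndices (n := n) (by omega) j))) /
        ((∏ j, shiftProd s t (x (topIndices (n := n + 1) (by omega) j))) *
          ∏ j, shiftProd s t (x (topIndices (n := n + 1) (by omega) j)))) atTop (𝓝 0) := by
  refine (tendsto_shiftProd_div_shiftProd hsa hsb (hbx _)
    (hx (Fin.mk_lt_mk.2 (by omega) :
      (⟨N - (n + 1) - 1, by omega⟩ : Fin N) < ⟨N - n - 1, by omega⟩))).congr
    fun t => ?_
  have hp := (shiftProd_pos hsb (hbx ⟨N - n - 1, by omega⟩) t).ne'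
  have hP : ∏ j, shiftProd s t (x (topIndices (n := n) (by omega) j)) ≠ 0 :=
    (prod_pos fun _ _ => shiftProd_pos hsb (hbx _) t).ne'
  rw [prod_topIndices_succ (fun r => shiftProd s t (x r)) hn,
    prod_topIndices_succ (fun r => shiftProd s t (x r)) (n := n) (by omega)]
  field_simp

end Toda

/-- Asymptotic behaviour, as `t → ∞`, of the variables `q^{(k,t)}_n` and `e^{(k,t)}_n` of the
nonautonomous discrete hungry Toda lattice built from the particular tau-function solution:
(i) `q^{(k,t)}_n` converges to a ratio of generalized Vandermonde determinants times
`ζ_{N-n-1}`; (ii) the product over an `M`-window of `q`'s converges to `z_{N-n-1} = ζ_{N-n-1}^M`;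
(iii) `e^{(k,t)}_n → 0`. -/
theorem stmt_17
    (M N : ℕ) (hM : 1 ≤ M) (hN : 2 ≤ N)
    (ζ : Fin N → ℝ) (hζpos : ∀ r, 0 < ζ r) (hζmono : StrictMono ζ)
    (w : Fin N → ℤ → ℝ)
    (hwper : ∀ (r : Fin N) (m : ℤ), w r (m + M) = w r m)
    (V : ℤ → (n : ℕ) → (Fin n → Fin N) → ℝ)
    (hV : ∀ (k : ℤ) (n : ℕ) (r : Fin n → Fin N),
      V k n r = Matrix.det (Matrix.of fun i l : Fin n =>
        w (r l) (k + (i : ℕ)) * ζ (r l) ^ (i : ℕ)))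
    (hVpos : ∀ (k : ℤ) (n : ℕ) (r : Fin n → Fin N), StrictMono r → 0 < V k n r)
    (a b : ℝ) (hb : b < ζ ⟨0, by omega⟩ ^ M)
    (s : ℕ → ℝ) (hsa : ∀ t, a ≤ s t) (hsb : ∀ t, s t ≤ b)
    (μ : ℕ → ℕ → ℝ)
    (hμ : ∀ t m : ℕ, μ t m = ∑ r : Fin N, w r (m : ℤ) * ζ r ^ m *
      ∏ τ' ∈ Finset.range t, (ζ r ^ M - s τ'))
    (τ : ℕ → ℕ → ℕ → ℝ)
    (hτ : ∀ k t n : ℕ,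
      τ k t n = Matrix.det (Matrix.of fun i j : Fin n => μ t (k + i + M * j)))
    (q e : ℕ → ℕ → ℕ → ℝ)
    (hq : ∀ k t n : ℕ,
      q k t n = τ k t n * τ (k + 1) t (n + 1) / (τ k t (n + 1) * τ (k + 1) t n))
    (he : ∀ k t n : ℕ,
      e k t n = τ k t (n + 2) * τ (k + M) t n / (τ k t (n + 1) * τ (k + M) t (n + 1))) :
    (∀ (k n : ℕ) (hn : n < N),
      Filter.Tendsto (fun t => q k t n) Filter.atTop
        (nhds (V (k : ℤ) n (fun j => ⟨N - n + (j : ℕ), by omega⟩) *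
            V ((k : ℤ) + 1) (n + 1) (fun j => ⟨N - (n + 1) + (j : ℕ), by omega⟩) /
            (V (k : ℤ) (n + 1) (fun j => ⟨N - (n + 1) + (j : ℕ), by omega⟩) *
              V ((k : ℤ) + 1) n (fun j => ⟨N - n + (j : ℕ), by omega⟩)) *
            ζ ⟨N - n - 1, by omega⟩))) ∧
    (∀ (k n : ℕ) (hn : n < N),
      Filter.Tendsto (fun t => ∏ j ∈ Finset.range M, q (k + j) t n) Filter.atTop
        (nhds (ζ ⟨N - n - 1, by omega⟩ ^ M))) ∧
    (∀ (k n : ℕ) (hn : n + 2 ≤ N),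
      Filter.Tendsto (fun t => e k t n) Filter.atTop (nhds 0)) := by
  have hz : StrictMono fun r => ζ r ^ M := fun r r' h =>
    pow_lt_pow_left₀ (hζmono h) (hζpos r).le (by omega)
  have hbz : ∀ r, b < ζ r ^ M := fun r =>
    hb.trans_le (hz.monotone (show (⟨0, by omega⟩ : Fin N) ≤ r from Nat.zero_le _))
  have hD : ∀ m (hm : m ≤ N) t, ∏ j, shiftProd s t (ζ (topIndices hm j) ^ M) ≠ 0 :=
    fun m hm t => (prod_pos fun _ _ => shiftProd_pos hsb (hbz _) t).ne'
  have hlim := fun k m (hm : m ≤ N) =>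
    tendsto_tau_div_prod_shiftProd hz hbz hwper hV hsa hsb hμ hτ k hm
  have hc := fun k m (hm : m ≤ N) => (tauLimit_pos hζpos hz hVpos k hm).ne'
  have part_i : ∀ k n (hn : n < N), Tendsto (fun t => q k t n) atTop
      (𝓝 (V k n (topIndices hn.le) * V (k + 1) (n + 1) (topIndices (n := n + 1) hn) /
        (V k (n + 1) (topIndices (n := n + 1) hn) * V (k + 1) n (topIndices hn.le)) *
        ζ ⟨N - n - 1, by omega⟩)) := fun k n hn => by
    have h := tendsto_mul_div_mul_of_tendsto_div (hlim k n hn.le) (hlim (k + 1) (n + 1) hn)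
      (hlim k (n + 1) hn) (hlim (k + 1) n hn.le) (mul_ne_zero (hc _ _ _) (hc _ _ _))
      (fun t => mul_ne_zero (hD _ _ t) (hD _ _ t)) (fun t => mul_ne_zero (hD _ _ t) (hD _ _ t))
      (tendsto_const_nhds.congr fun t => by
        rw [mul_comm, div_self (mul_ne_zero (hD _ _ t) (hD _ _ t))])
    rw [mul_one, tauLimit_mul_div_mul hζpos hz] at h
    simpa only [hq] using h
  refine ⟨part_i, fun k n hn => ?_, fun k n hn => ?_⟩
  · simpa only [prod_range_V_ratio_mul_eq_pow hwper hV hVpos k hn] using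
      tendsto_finsetProd (range M) fun j _ => part_i (k + j) n hn
  · simpa only [he, mul_zero] using tendsto_mul_div_mul_of_tendsto_div (hlim k (n + 2) hn)
      (hlim (k + M) n (by omega)) (hlim k (n + 1) (by omega)) (hlim (k + M) (n + 1) (by omega))
      (mul_ne_zero (hc _ _ _) (hc _ _ _)) (fun t => mul_ne_zero (hD _ _ t) (hD _ _ t))
      (fun t => mul_ne_zero (hD _ _ t) (hD _ _ t))
      (tendsto_prod_shiftProd_topIndices_mul_div hsa hsb hz hbz hn)
end
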